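/- arXiv:2211.10276 — 6 statements merged into one kernel-verified Lean document; each statement's English description precedes it below -/
import Mathlib

section
/- Let ψ: A* → B* be a monoid homomorphism between free monoids over finite alphabets induced by a set map A → B*. If L ⊆ B* is a context-free language, then ψ^{-1}(L) ⊆ A* is a context-free language. -/
/-!
Given a grammar `g` for `L`, the grammar for `ψ⁻¹(L)` guesses a derivation tree of `g` with yield
`ψ(w)` and reads `w` off it. Its nonterminals are triples `[s, Y, s']` of a symbol `Y` of `g` and
two states of the transducer that reads `ψ(w)` letter by letter and emits each letter `a` of `w`
when it reads the first letter of `ψ(a)`; the state records the unread part of the current block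
`ψ(a)`. A letter with `ψ(a) = []` is emitted together with the preceding letter, or by the start
symbol when no letter precedes it.

Both inclusions are instances of one principle: the languages derivable from the nonterminals of
a grammar form the least solution of the inequations `f(X) ⊇ f(Y₁)⋯f(Yₙ)`, one for each rule
`X → Y₁⋯Yₙ`. For soundness it is applied to the new grammar, with the intended meaning of each
nonterminal; for completeness to `g`, with the words of `B*` all of whose transducer runs are
derived by the corresponding triples.
-/

namespace Symbol

variable {T N : Type*}

def toLanguage (f : N → Language T) : Symbol T N → Language T
  | terminal t => {[t]}
  | nonterminal n => f n

def sententialLanguage (f : N → Language T) (u : List (Symbol T N)) : Language T :=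
  (u.map (toLanguage f)).prod

@[simp] lemma sententialLanguage_nil (f : N → Language T) : sententialLanguage f [] = 1 := rfl

@[simp] lemma sententialLanguage_cons (f : N → Language T) (s : Symbol T N)
    (u : List (Symbol T N)) :
    sententialLanguage f (s :: u) = toLanguage f s * sententialLanguage f u :=
  List.prod_cons

@[simp] lemma sententialLanguage_append (f : N → Language T) (u v : List (Symbol T N)) :
    sententialLanguage f (u ++ v) = sententialLanguage f u * sententialLanguage f v := by
  simp [sententialLanguage]

lemma mem_sententialLanguage_map_terminal (f : N → Language T) (w : List T) :
    w ∈ sententialLanguage f (w.map terminal) := by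
  induction w with
  | nil => exact Language.nil_mem_one
  | cons t w ih => exact Language.append_mem_mul (l := {[t]}) rfl ih

end Symbol

namespace ContextFreeGrammar

open Symbol

variable {T : Type*} (g : ContextFreeGrammar T)

def languageOf (u : List (Symbol T g.NT)) : Language T :=
  {w | g.Derives u (w.map terminal)}

variable {g}

lemma mem_languageOf {u : List (Symbol T g.NT)} {w : List T} :
    w ∈ g.languageOf u ↔ g.Derives u (w.map terminal) := Iff.rfl

lemma append_mem_languageOf {u v : List (Symbol T g.NT)} {w₁ w₂ : List T}
    (h₁ : w₁ ∈ g.languageOf u) (h₂ : w₂ ∈ g.languageOf v) : w₁ ++ w₂ ∈ g.languageOf (u ++ v) := by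
  rw [mem_languageOf, List.map_append]
  exact (h₁.append_right v).trans (h₂.append_left (w₁.map terminal))

lemma nil_mem_languageOf_nil : [] ∈ g.languageOf [] := Derives.refl _

lemma singleton_mem_languageOf_terminal (t : T) : [t] ∈ g.languageOf [terminal t] :=
  Derives.refl _

lemma mem_languageOf_input_of_mem_rules {r : ContextFreeRule T g.NT} (hr : r ∈ g.rules)
    {w : List T} (hw : w ∈ g.languageOf r.output) : w ∈ g.languageOf [nonterminal r.input] :=
  Produces.trans_derives ⟨r, hr, ContextFreeRule.Rewrites.input_output⟩ hw

section LeastSolution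

variable {f : g.NT → Language T}

lemma Produces.sententialLanguage_le
    (hf : ∀ r ∈ g.rules, sententialLanguage f r.output ≤ f r.input)
    {u v : List (Symbol T g.NT)} (h : g.Produces u v) :
    sententialLanguage f v ≤ sententialLanguage f u := by
  obtain ⟨r, hr, hrw⟩ := h
  obtain ⟨p, q, rfl, rfl⟩ := hrw.exists_parts
  simp only [sententialLanguage_append]
  exact mul_le_mul' (mul_le_mul' le_rfl (by simpa [toLanguage] using hf r hr)) le_rfl

lemma Derives.sententialLanguage_le
    (hf : ∀ r ∈ g.rules, sententialLanguage f r.output ≤ f r.input)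
    {u v : List (Symbol T g.NT)} (h : g.Derives u v) :
    sententialLanguage f v ≤ sententialLanguage f u := by
  induction h with
  | refl => exact le_rfl
  | tail _ hp ih => exact (hp.sententialLanguage_le hf).trans ih

lemma languageOf_nonterminal_le (hf : ∀ r ∈ g.rules, sententialLanguage f r.output ≤ f r.input)
    (n : g.NT) : g.languageOf [nonterminal n] ≤ f n := fun w hw => by
  simpa [toLanguage] using hw.sententialLanguage_le hf (mem_sententialLanguage_map_terminal f w)

end LeastSolution

end ContextFreeGrammar

namespace InverseHom

open Symbol ContextFreeGrammar

section Transducer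

variable {A B : Type*} (ψ : A → List B)

/-- `some ⟨a, i⟩` is the state in the middle of the block `ψ a`, before its letter `i`;
`none` is the state between two blocks. -/
abbrev State : Type _ := Option (Σ a : A, Fin (ψ a).length)

def after (a : A) (j : ℕ) : State ψ :=
  if h : j < (ψ a).length then some ⟨a, j, h⟩ else none

def rem : State ψ → List B
  | none => []
  | some ⟨a, i⟩ => (ψ a).drop i

lemma rem_after (a : A) (j : ℕ) : rem ψ (after ψ a j) = (ψ a).drop j := by
  unfold after
  split_ifs with h
  · rfl
  · simp [rem, List.drop_eq_nil_of_le (not_lt.mp h)]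

/-- `Step ψ s b w s'`: reading `b` in state `s`, the transducer emits `w` and moves to `s'`. -/
inductive Step : State ψ → B → List A → State ψ → Prop
  | emit {a : A} {b : B} {t : List B} {e : List A} (ha : ψ a = b :: t) (he : e.flatMap ψ = []) :
      Step none b (a :: e) (after ψ a 1)
  | consume (x : Σ a : A, Fin (ψ a).length) :
      Step (some x) (ψ x.1)[x.2] [] (after ψ x.1 (x.2 + 1))

inductive Run : State ψ → List B → List A → State ψ → Prop
  | nil (s : State ψ) : Run s [] [] s
  | cons {s₀ s₁ s₂ : State ψ} {b : B} {v : List B} {w₁ w₂ : List A} :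
      Step ψ s₀ b w₁ s₁ → Run s₁ v w₂ s₂ → Run s₀ (b :: v) (w₁ ++ w₂) s₂

variable {ψ}

lemma Run.append {s₀ s₁ s₂ : State ψ} {v₁ v₂ : List B} {w₁ w₂ : List A}
    (h₁ : Run ψ s₀ v₁ w₁ s₁) (h₂ : Run ψ s₁ v₂ w₂ s₂) : Run ψ s₀ (v₁ ++ v₂) (w₁ ++ w₂) s₂ := by
  induction h₁ with
  | nil => exact h₂
  | cons hs _ ih => simpa using Run.cons hs (ih h₂)

lemma Run.exists_of_append {s₀ s₂ : State ψ} {v₁ v₂ : List B} {w : List A}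
    (h : Run ψ s₀ (v₁ ++ v₂) w s₂) :
    ∃ s₁ w₁ w₂, w = w₁ ++ w₂ ∧ Run ψ s₀ v₁ w₁ s₁ ∧ Run ψ s₁ v₂ w₂ s₂ := by
  induction v₁ generalizing s₀ w with
  | nil => exact ⟨s₀, [], w, rfl, Run.nil s₀, h⟩
  | cons b v₁ ih =>
    obtain _ | ⟨hs, hr⟩ := h
    obtain ⟨s₁, w₁, w₂, rfl, hr₁, hr₂⟩ := ih hr
    exact ⟨s₁, _ ++ w₁, w₂, (List.append_assoc _ _ _).symm, Run.cons hs hr₁, hr₂⟩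

lemma Run.eq_of_nil {s s' : State ψ} {w : List A} (h : Run ψ s [] w s') : w = [] ∧ s' = s := by
  cases h
  exact ⟨rfl, rfl⟩

lemma Run.step_of_singleton {s s' : State ψ} {b : B} {w : List A} (h : Run ψ s [b] w s') :
    Step ψ s b w s' := by
  obtain _ | ⟨hs, hr⟩ := h
  obtain ⟨rfl, rfl⟩ := hr.eq_of_nil
  simpa using hs

lemma run_drop (a : A) (j : ℕ) : Run ψ (after ψ a j) ((ψ a).drop j) [] none := by
  unfold after
  split_ifs with h
  · rw [List.drop_eq_getElem_cons h]
    simpa using Run.cons (Step.consume ⟨a, j, h⟩) (run_drop a (j + 1))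
  · rw [List.drop_eq_nil_of_le (not_lt.mp h)]
    exact Run.nil none
termination_by (ψ a).length - j

lemma run_flatMap (w : List A) :
    ∃ e w', w = e ++ w' ∧ e.flatMap ψ = [] ∧ Run ψ none (w.flatMap ψ) w' none := by
  induction w with
  | nil => exact ⟨[], [], rfl, rfl, Run.nil none⟩
  | cons a w ih =>
    obtain ⟨e, w', rfl, he, hr⟩ := ih
    cases ha : ψ a with
    | nil => exact ⟨a :: e, w', rfl, by simp [ha, he], by simpa [ha] using hr⟩
    | cons b t =>
      have hletter : Run ψ none (ψ a) (a :: e) none := by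
        rw [ha]
        simpa [ha] using Run.cons (Step.emit ha he) (run_drop a 1)
      refine ⟨[], a :: e ++ w', rfl, rfl, ?_⟩
      simpa [ha] using hletter.append hr

end Transducer

variable {A B : Type} (ψ : A → List B) (g : ContextFreeGrammar B)

inductive NT
  | start
  | null
  | triple (s : State ψ) (Y : Symbol B g.NT) (s' : State ψ)

open NT

def annotate : State ψ → List (Symbol B g.NT) → List (State ψ) → List (Symbol A (NT ψ g))
  | s, Y :: γ, s' :: qs => nonterminal (triple s Y s') :: annotate s' γ qs
  | _, _, _ => []

def startRule : ContextFreeRule A (NT ψ g) :=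
  ⟨start, [nonterminal null, nonterminal (triple none (nonterminal g.initial) none)]⟩

def nullRule : ContextFreeRule A (NT ψ g) := ⟨null, []⟩

/-- The letter `a`, followed by the null letters after it, is emitted by the first letter of
`ψ a`, or by `null` when `ψ a = []`. -/
def letterRule (a : A) : ContextFreeRule A (NT ψ g) where
  input := match ψ a with
    | [] => null
    | b :: _ => triple none (terminal b) (after ψ a 1)
  output := [terminal a, nonterminal null]

def consumeRule (x : Σ a : A, Fin (ψ a).length) : ContextFreeRule A (NT ψ g) :=
  ⟨triple (some x) (terminal (ψ x.1)[x.2]) (after ψ x.1 (x.2 + 1)), []⟩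

def liftRule (r : ContextFreeRule B g.NT) (s : State ψ) (qs : List (State ψ)) :
    ContextFreeRule A (NT ψ g) :=
  ⟨triple s (nonterminal r.input) (qs.getLastD s), annotate ψ g s r.output qs⟩

open Classical in
noncomputable def rules [Fintype A] : Finset (ContextFreeRule A (NT ψ g)) :=
  {startRule ψ g, nullRule ψ g} ∪ Finset.univ.image (letterRule ψ g) ∪
    Finset.univ.image (consumeRule ψ g) ∪
    g.rules.biUnion fun r => Finset.univ.image
      fun p : State ψ × List.Vector (State ψ) r.output.length => liftRule ψ g r p.1 p.2.toList

noncomputable def invGrammar [Fintype A] : ContextFreeGrammar A := ⟨NT ψ g, start, rules ψ g⟩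

lemma mem_invGrammar_rules [Fintype A] {r' : ContextFreeRule A (NT ψ g)} :
    r' ∈ (invGrammar ψ g).rules ↔ r' = startRule ψ g ∨ r' = nullRule ψ g ∨
      (∃ a, r' = letterRule ψ g a) ∨ (∃ x, r' = consumeRule ψ g x) ∨
      ∃ r ∈ g.rules, ∃ s qs, qs.length = r.output.length ∧ r' = liftRule ψ g r s qs := by
  show r' ∈ rules ψ g ↔ _
  simp only [rules, Finset.mem_union, Finset.mem_insert, Finset.mem_singleton,
    Finset.mem_image, Finset.mem_univ, true_and, Finset.mem_biUnion, Prod.exists, or_assoc]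
  refine or_congr_right (or_congr_right (or_congr (exists_congr fun _ => eq_comm)
    (or_congr (exists_congr fun _ => eq_comm) (exists_congr fun r => and_congr_right fun _ => ?_))))
  constructor
  · rintro ⟨s, qs, rfl⟩
    exact ⟨s, qs.toList, qs.toList_length, rfl⟩
  · rintro ⟨s, qs, hqs, rfl⟩
    exact ⟨s, ⟨qs, hqs⟩, rfl⟩

section Soundness

/-- `[s, Y, s']` derives only words `w` such that the unread rest of the block open in `s`,
followed by `ψ w`, is a word derived from `Y` followed by the unread rest of the block open
in `s'`. -/
def spec : NT ψ g → Language A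
  | start => {w | w.flatMap ψ ∈ g.language}
  | null => {e | e.flatMap ψ = []}
  | triple s Y s' => {w | ∃ v ∈ g.languageOf [Y], rem ψ s ++ w.flatMap ψ = v ++ rem ψ s'}

variable {ψ g}

lemma mem_spec_start {w : List A} : w ∈ spec ψ g start ↔ w.flatMap ψ ∈ g.language :=
  Iff.rfl

lemma mem_spec_null {e : List A} : e ∈ spec ψ g null ↔ e.flatMap ψ = [] := Iff.rfl

lemma mem_spec_triple {s s' : State ψ} {Y : Symbol B g.NT} {w : List A} :
    w ∈ spec ψ g (triple s Y s') ↔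
      ∃ v ∈ g.languageOf [Y], rem ψ s ++ w.flatMap ψ = v ++ rem ψ s' := Iff.rfl

lemma exists_of_mem_sententialLanguage_annotate :
    ∀ (γ : List (Symbol B g.NT)) (s : State ψ) (qs : List (State ψ)) (w : List A),
      qs.length = γ.length → w ∈ sententialLanguage (spec ψ g) (annotate ψ g s γ qs) →
      ∃ v ∈ g.languageOf γ, rem ψ s ++ w.flatMap ψ = v ++ rem ψ (qs.getLastD s)
  | [], s, [], w, _, hw =>
    ⟨[], nil_mem_languageOf_nil, by simp_all [annotate, Language.mem_one]⟩
  | Y :: γ, s, s' :: qs, w, hlen, hw => by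
    obtain ⟨w₁, ⟨v₁, hv₁, h₁⟩, w₂, hw₂, rfl⟩ := Language.mem_mul.mp hw
    obtain ⟨v₂, hv₂, h₂⟩ :=
      exists_of_mem_sententialLanguage_annotate γ s' qs w₂ (by simpa using hlen) hw₂
    refine ⟨v₁ ++ v₂, append_mem_languageOf hv₁ hv₂, ?_⟩
    rw [List.getLastD_cons, List.flatMap_append, ← List.append_assoc, h₁, List.append_assoc, h₂,
      List.append_assoc]

lemma spec_input_of_mem_rules [Fintype A] {r : ContextFreeRule A (NT ψ g)}
    (hr : r ∈ (invGrammar ψ g).rules) :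
    sententialLanguage (spec ψ g) r.output ≤ spec ψ g r.input := by
  intro w (hw : w ∈ sententialLanguage (spec ψ g) r.output)
  show w ∈ spec ψ g r.input
  rcases (mem_invGrammar_rules ψ g).mp hr with
    rfl | rfl | ⟨a, rfl⟩ | ⟨⟨a, i⟩, rfl⟩ | ⟨r, hr₀, s, qs, hqs, rfl⟩
  · simp only [startRule, sententialLanguage_cons, sententialLanguage_nil, mul_one,
      toLanguage] at hw
    obtain ⟨e, he, w', ⟨v, hv, h⟩, rfl⟩ := Language.mem_mul.mp hw
    have he : e.flatMap ψ = [] := he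
    simp only [rem, List.nil_append, List.append_nil] at h
    rw [startRule, mem_spec_start, List.flatMap_append, he, List.nil_append, h]
    exact hv
  · obtain rfl : w = [] := hw
    rfl
  · simp only [letterRule, sententialLanguage_cons, sententialLanguage_nil, mul_one,
      toLanguage] at hw
    obtain ⟨_, rfl, e, he, rfl⟩ := Language.mem_mul.mp hw
    have he : e.flatMap ψ = [] := he
    cases ha : ψ a with
    | nil => simp [letterRule, ha, mem_spec_null, he]
    | cons b t =>
      simp only [letterRule, ha, mem_spec_triple]
      refine ⟨[b], singleton_mem_languageOf_terminal b, ?_⟩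
      rw [rem_after]
      simp [rem, ha, he]
  · obtain rfl : w = [] := hw
    refine ⟨[(ψ a)[i]], singleton_mem_languageOf_terminal _, ?_⟩
    rw [rem_after]
    simp [rem]
  · obtain ⟨v, hv, h⟩ := exists_of_mem_sententialLanguage_annotate r.output s qs w hqs hw
    exact ⟨v, mem_languageOf_input_of_mem_rules hr₀ hv, h⟩

end Soundness

section Completeness

variable [Fintype A]

def liftable (Y : g.NT) : Language B :=
  {v | ∀ s w s', Run ψ s v w s' →
    w ∈ (invGrammar ψ g).languageOf [nonterminal (triple s (nonterminal Y) s')]}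

variable {ψ g}

lemma mem_languageOf_null {e : List A} (he : e.flatMap ψ = []) :
    e ∈ (invGrammar ψ g).languageOf [nonterminal null] := by
  induction e with
  | nil =>
    exact mem_languageOf_input_of_mem_rules (r := nullRule ψ g)
      ((mem_invGrammar_rules ψ g).mpr (by simp)) nil_mem_languageOf_nil
  | cons a e ih =>
    rw [List.flatMap_cons, List.append_eq_nil_iff] at he
    have hinput : (letterRule ψ g a).input = null := by simp [letterRule, he.1]
    exact hinput ▸ mem_languageOf_input_of_mem_rules ((mem_invGrammar_rules ψ g).mpr (by simp))
      (append_mem_languageOf (singleton_mem_languageOf_terminal a) (ih he.2))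

lemma Step.mem_languageOf {s s' : State ψ} {b : B} {w : List A} (h : Step ψ s b w s') :
    w ∈ (invGrammar ψ g).languageOf [nonterminal (triple s (terminal b) s')] := by
  cases h with
  | @emit a b t e ha he =>
    have hinput : (letterRule ψ g a).input = triple none (terminal b) (after ψ a 1) := by
      simp [letterRule, ha]
    exact hinput ▸ mem_languageOf_input_of_mem_rules ((mem_invGrammar_rules ψ g).mpr (by simp))
      (append_mem_languageOf (singleton_mem_languageOf_terminal a)
        (mem_languageOf_null he))
  | consume x =>
    exact mem_languageOf_input_of_mem_rules (r := consumeRule ψ g x)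
      ((mem_invGrammar_rules ψ g).mpr (by simp)) nil_mem_languageOf_nil

lemma exists_annotate_of_run (γ : List (Symbol B g.NT)) {v : List B}
    (hv : v ∈ sententialLanguage (liftable ψ g) γ) {s s' : State ψ} {w : List A}
    (h : Run ψ s v w s') :
    ∃ qs : List (State ψ), qs.length = γ.length ∧ qs.getLastD s = s' ∧
      w ∈ (invGrammar ψ g).languageOf (annotate ψ g s γ qs) := by
  induction γ generalizing v s w with
  | nil =>
    obtain rfl : v = [] := hv
    obtain ⟨rfl, rfl⟩ := h.eq_of_nil
    exact ⟨[], rfl, rfl, nil_mem_languageOf_nil⟩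
  | cons Y γ ih =>
    obtain ⟨v₁, hv₁, v₂, hv₂, rfl⟩ := Language.mem_mul.mp hv
    obtain ⟨s₁, w₁, w₂, rfl, h₁, h₂⟩ := h.exists_of_append
    obtain ⟨qs, hlen, hlast, hw₂⟩ := ih hv₂ h₂
    have hw₁ : w₁ ∈ (invGrammar ψ g).languageOf [nonterminal (triple s Y s₁)] := by
      cases Y with
      | terminal b =>
        obtain rfl : v₁ = [b] := hv₁
        exact h₁.step_of_singleton.mem_languageOf
      | nonterminal X => exact hv₁ s w₁ s₁ h₁
    exact ⟨s₁ :: qs, by simp [hlen], by rwa [List.getLastD_cons],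
      append_mem_languageOf hw₁ hw₂⟩

lemma liftable_input_of_mem_rules {r : ContextFreeRule B g.NT} (hr : r ∈ g.rules) :
    sententialLanguage (liftable ψ g) r.output ≤ liftable ψ g r.input := by
  intro v hv s w s' h
  obtain ⟨qs, hlen, rfl, hw⟩ := exists_annotate_of_run r.output hv h
  exact mem_languageOf_input_of_mem_rules (r := liftRule ψ g r s qs)
    ((mem_invGrammar_rules ψ g).mpr (.inr (.inr (.inr (.inr ⟨r, hr, s, qs, hlen, rfl⟩))))) hw

end Completeness

theorem language_invGrammar [Fintype A] :
    (invGrammar ψ g).language = {w | w.flatMap ψ ∈ g.language} := by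
  ext w
  constructor
  · exact fun hw => languageOf_nonterminal_le (g := invGrammar ψ g)
      (fun _ => spec_input_of_mem_rules) start hw
  · intro hw
    obtain ⟨e, w', rfl, he, hrun⟩ := run_flatMap (ψ := ψ) w
    have hS :=
      languageOf_nonterminal_le (fun _ => liftable_input_of_mem_rules (ψ := ψ)) g.initial hw
    exact mem_languageOf_input_of_mem_rules (r := startRule ψ g)
      ((mem_invGrammar_rules ψ g).mpr (by simp))
      (append_mem_languageOf (u := [nonterminal null]) (mem_languageOf_null he)
        (hS none w' none hrun))

end InverseHom

theorem stmt2_general {A B : Type} [Fintype A] (ψ : A → List B)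
    (L : Language B) (hL : L.IsContextFree) :
    Language.IsContextFree { w : List A | w.flatMap ψ ∈ L } := by
  obtain ⟨g, rfl⟩ := hL
  exact ⟨InverseHom.invGrammar ψ g, InverseHom.language_invGrammar ψ g⟩

/-- Context-free languages are closed under inverse images of monoid homomorphisms
between free monoids induced by a set map `ψ : A → B*`. -/
theorem stmt2 {A B : Type} [Fintype A] [Fintype B] (ψ : A → List B)
    (L : Language B) (hL : L.IsContextFree) :
    Language.IsContextFree { w : List A | w.flatMap ψ ∈ L } :=
  stmt2_general ψ L hL
end

section
/- There exists an unambiguous context-free grammar generating the language of all words over {a_1,...,a_n, a_1^{-1},...,a_n^{-1}} that represent the identity in the free group F_n. Concretely, the grammar with non-terminals S, A_i, Ā_i (for i = 1,...,n), initial symbol S, and productions S → ε | a_j Ā_j S | ā_j A_j S, A_i → a_i | ā_i A_i A_i | a_j Ā_j A_i (j ≠ i) | ā_j A_j A_i, Ā_i → ā_i | a_i Ā_i Ā_i | a_j Ā_j Ā_i | ā_j A_j Ā_i (j ≠ i), generates exactly L(1) and is unambiguous. -/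
open ContextFreeGrammar

instance {T N : Type} [DecidableEq T] [DecidableEq N] :
    DecidableEq (ContextFreeRule T N) := fun a b =>
  decidable_of_iff (a.input = b.input ∧ a.output = b.output)
    (by cases a; cases b; simp)

/-- The formal inverse of a letter: `(i, b)` stands for `aᵢ` if `b = true` and for
`aᵢ⁻¹` if `b = false`. -/
def letterInv {n : ℕ} (c : Fin n × Bool) : Fin n × Bool := (c.1, !c.2)

/-- Nonterminals: `none` is the initial symbol `S`; `some t` is the nonterminal `N_t`
(`A_i` when `t = aᵢ`, `Ā_i` when `t = aᵢ⁻¹`) that derives exactly the words evaluating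
to the letter `t` with no proper initial segment evaluating to `t`. -/
abbrev TrivNT (n : ℕ) : Type := Option (Fin n × Bool)

/-- The production rules `S → ε`, `S → c N_{c⁻¹} S` (for every letter `c`),
`N_t → t`, and `N_t → c N_{c⁻¹} N_t` (for every letter `c ≠ t`); this is exactly the
grammar `S → ε | a_j Ā_j S | ā_j A_j S`, `A_i → a_i | ā_i A_i A_i | a_j Ā_j A_i (j ≠ i)
| ā_j A_j A_i`, `Ā_i → ā_i | a_i Ā_i Ā_i | a_j Ā_j Ā_i | ā_j A_j Ā_i (j ≠ i)`. -/
noncomputable def trivRules (n : ℕ) : List (ContextFreeRule (Fin n × Bool) (TrivNT n)) :=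
  [(⟨none, []⟩ : ContextFreeRule (Fin n × Bool) (TrivNT n))] ++
    ((Finset.univ : Finset (Fin n × Bool)).toList.map fun c =>
      ⟨none, [Symbol.terminal c, Symbol.nonterminal (some (letterInv c)),
        Symbol.nonterminal none]⟩) ++
    ((Finset.univ : Finset (Fin n × Bool)).toList.map fun t =>
      ⟨some t, [Symbol.terminal t]⟩) ++
    (((Finset.univ : Finset ((Fin n × Bool) × (Fin n × Bool)))).toList.filterMap
      fun tc =>
        if tc.2 = tc.1 then none else
          some ⟨some tc.1, [Symbol.terminal tc.2,
            Symbol.nonterminal (some (letterInv tc.2)), Symbol.nonterminal (some tc.1)]⟩)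

/-- The grammar of the paper for the language of all words representing `1 ∈ Fₙ`. -/
noncomputable def trivGrammar (n : ℕ) : ContextFreeGrammar (Fin n × Bool) :=
  ⟨TrivNT n, none, (trivRules n).toFinset⟩

/-- A leftmost derivation in a context-free grammar, recording the list of rules applied. -/
inductive LeftmostDerivation {T : Type} (g : ContextFreeGrammar T) :
    List (Symbol T g.NT) → List (Symbol T g.NT) → List (ContextFreeRule T g.NT) → Prop
  | refl (w : List (Symbol T g.NT)) : LeftmostDerivation g w w []
  | step {u v w : List (Symbol T g.NT)} {r : ContextFreeRule T g.NT}
      {rs : List (ContextFreeRule T g.NT)}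
      (hr : r ∈ g.rules)
      (hstep : ∃ p q : List (Symbol T g.NT),
        (∀ s ∈ p, ∃ t : T, s = Symbol.terminal t) ∧
        u = p ++ [Symbol.nonterminal r.input] ++ q ∧
        v = p ++ r.output ++ q)
      (hrest : LeftmostDerivation g v w rs) :
      LeftmostDerivation g u w (r :: rs)

/-- A context-free grammar is unambiguous if every word of its language has exactly one
leftmost derivation from the initial symbol. -/
def Unambiguous {T : Type} (g : ContextFreeGrammar T) : Prop :=
  ∀ w : List T, ∀ rs₁ rs₂ : List (ContextFreeRule T g.NT),
    LeftmostDerivation g [Symbol.nonterminal g.initial] (w.map Symbol.terminal) rs₁ →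
    LeftmostDerivation g [Symbol.nonterminal g.initial] (w.map Symbol.terminal) rs₂ →
    rs₁ = rs₂


/-!
Give each symbol a value in `Fₙ`: a letter is itself, `S` is `1` and `N_t` is `t`. Every
production preserves the value of a sentential form, so only words evaluating to `1` are generated.

Conversely, read a word as a walk from `1` in the Cayley tree of `Fₙ`; `N_t` derives exactly the
walks that reach `t` for the first time at their end. A walk whose first step goes to `c` and which
ends at `1`, or at a letter `t ≠ c`, must come back through `1`, since `c` and `t` lie in different
branches of the tree at `1`. Cutting at the first return splits the word as `c u v` with `u` a first
passage to `c⁻¹`: this is the shape of the productions `S → c N_{c⁻¹} S` and `N_t → c N_{c⁻¹} N_t`.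

Unambiguity: every production is `ε` or starts with a terminal, the productions of a nonterminal
differ in that terminal, and `S` occurs only as the last symbol of a sentential form. Hence each
step of a leftmost derivation is forced by the next letter of the word, or by its end.
-/

namespace LeftmostDerivation

variable {T : Type} {g : ContextFreeGrammar T}

theorem append_nonterminal_inj {N : Type*} {p p' q q' : List (Symbol T N)} {X X' : N}
    (hp : ∀ s ∈ p, ∃ a, s = .terminal a) (hp' : ∀ s ∈ p', ∃ a, s = .terminal a)
    (h : p ++ .nonterminal X :: q = p' ++ .nonterminal X' :: q') :
    p = p' ∧ X = X' ∧ q = q' := by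
  induction p generalizing p' with
  | nil =>
    cases p' with
    | nil => simpa using h
    | cons s p' => obtain ⟨a, rfl⟩ := hp' s (by simp); simp at h
  | cons s p ih =>
    cases p' with
    | nil => obtain ⟨a, rfl⟩ := hp s (by simp); simp at h
    | cons s' p' =>
      simp only [List.cons_append, List.cons.injEq] at h
      obtain ⟨rfl, h⟩ := h
      simpa using ih (fun x hx => hp x (by simp [hx])) (fun x hx => hp' x (by simp [hx])) h

theorem eq_of_terminal {u ω : List (Symbol T g.NT)} {rs : List (ContextFreeRule T g.NT)}
    (hu : ∀ s ∈ u, ∃ a, s = .terminal a) (h : LeftmostDerivation g u ω rs) :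
    rs = [] ∧ ω = u := by
  cases h with
  | refl => exact ⟨rfl, rfl⟩
  | @step _ _ _ r _ _ hstep _ =>
    obtain ⟨p, q, -, rfl, -⟩ := hstep
    obtain ⟨a, ha⟩ := hu (.nonterminal r.input) (by simp)
    cases ha

theorem exists_append_of_terminal {x z ω : List (Symbol T g.NT)}
    {rs : List (ContextFreeRule T g.NT)} (hx : ∀ s ∈ x, ∃ a, s = .terminal a)
    (h : LeftmostDerivation g (x ++ z) ω rs) : ∃ ω', ω = x ++ ω' := by
  generalize hu : x ++ z = u at h
  induction h generalizing z with
  | refl => exact ⟨z, hu.symm⟩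
  | @step _ _ _ r _ _ hstep _ ih =>
    obtain ⟨p, q, -, rfl, rfl⟩ := hstep
    rw [List.append_assoc, List.singleton_append, List.append_eq_append_iff] at hu
    rcases hu with ⟨a, rfl, -⟩ | ⟨_ | ⟨s, c⟩, rfl, hc⟩
    · exact ih (z := a ++ r.output ++ q) (by simp)
    · exact ih (z := r.output ++ q) (by simp)
    · obtain ⟨a, ha⟩ := hx s (by simp)
      simp [ha] at hc

theorem output_head?_eq {p o q ω : List (Symbol T g.NT)} {rs : List (ContextFreeRule T g.NT)}
    (hp : ∀ s ∈ p, ∃ a, s = .terminal a) (ho : o = [] ∨ ∃ a o', o = .terminal a :: o')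
    (hq : o = [] → q = []) (h : LeftmostDerivation g (p ++ o ++ q) ω rs) :
    o.head? = ω[p.length]? := by
  rcases ho with rfl | ⟨a, o', rfl⟩
  · rw [hq rfl, List.append_nil, List.append_nil] at h
    simp [(eq_of_terminal hp h).2]
  · obtain ⟨ω', rfl⟩ := exists_append_of_terminal (x := p ++ [.terminal a])
      (by simpa [or_imp, forall_and] using hp) (by simpa using h)
    simp

theorem eq_of_predictive (P : List (Symbol T g.NT) → Prop)
    (hhead : ∀ r ∈ g.rules, r.output = [] ∨ ∃ a o, r.output = .terminal a :: o)
    (hdet : ∀ r₁ ∈ g.rules, ∀ r₂ ∈ g.rules, r₁.input = r₂.input →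
      r₁.output.head? = r₂.output.head? → r₁ = r₂)
    (hnull : ∀ r ∈ g.rules, ∀ p q, P (p ++ .nonterminal r.input :: q) → r.output = [] → q = [])
    (hstep : ∀ r ∈ g.rules, ∀ p q, (∀ s ∈ p, ∃ a, s = .terminal a) →
      P (p ++ .nonterminal r.input :: q) → P (p ++ r.output ++ q))
    {u : List (Symbol T g.NT)} {w : List T} {rs₁ rs₂ : List (ContextFreeRule T g.NT)}
    (hu : P u) (h₁ : LeftmostDerivation g u (w.map .terminal) rs₁)
    (h₂ : LeftmostDerivation g u (w.map .terminal) rs₂) : rs₁ = rs₂ := by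
  have hw : ∀ s ∈ w.map (Symbol.terminal (N := g.NT)), ∃ a, s = .terminal a := by simp
  generalize w.map Symbol.terminal = ω at h₁ h₂ hw
  induction h₁ generalizing rs₂ with
  | refl => exact (eq_of_terminal hw h₂).1.symm
  | @step _ _ _ r₁ _ hr₁ hstep₁ hrest₁ ih =>
    obtain ⟨p, q, hp, rfl, rfl⟩ := hstep₁
    rw [List.append_assoc, List.singleton_append] at hu
    cases h₂ with
    | refl => obtain ⟨a, ha⟩ := hw (.nonterminal r₁.input) (by simp); cases ha
    | @step _ _ _ r₂ _ hr₂ hstep₂ hrest₂ =>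
      obtain ⟨p₂, q₂, hp₂, hpq, rfl⟩ := hstep₂
      simp only [List.append_assoc, List.singleton_append] at hpq
      obtain ⟨rfl, hX, rfl⟩ := append_nonterminal_inj hp hp₂ hpq
      have hhead₁ := output_head?_eq hp (hhead r₁ hr₁) (hnull r₁ hr₁ p q hu) hrest₁
      have hhead₂ := output_head?_eq hp (hhead r₂ hr₂) (hnull r₂ hr₂ p q (hX ▸ hu)) hrest₂
      obtain rfl := hdet r₁ hr₁ r₂ hr₂ hX (hhead₁.trans hhead₂.symm)
      rw [ih (hstep r₁ hr₁ p q hp hu) hrest₂ hw]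

end LeftmostDerivation

theorem ContextFreeGrammar.derives_terminal_cons_append {T : Type} {g : ContextFreeGrammar T}
    {r : ContextFreeRule T g.NT} (hr : r ∈ g.rules) {a : T} {Y X : g.NT}
    {u v : List (Symbol T g.NT)}
    (hout : r.output = [.terminal a, .nonterminal Y, .nonterminal X])
    (hY : g.Derives [.nonterminal Y] u) (hX : g.Derives [.nonterminal X] v) :
    g.Derives [.nonterminal r.input] (.terminal a :: (u ++ v)) := by
  have hYX : g.Derives ([.terminal a] ++ [.nonterminal Y] ++ [.nonterminal X])
      ([.terminal a] ++ u ++ v) :=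
    ((hY.append_left _).append_right _).trans (hX.append_left _)
  exact Produces.trans_derives ⟨r, hr, ContextFreeRule.Rewrites.input_output⟩
    (by simpa [hout] using hYX)

namespace FreeGroup

variable {α : Type*}

theorem mk_cons (c : α × Bool) (w : List (α × Bool)) : mk (c :: w) = mk [c] * mk w := by
  rw [mul_mk, List.singleton_append]

theorem mk_append_of_mk_eq_one {x : List (α × Bool)} (y : List (α × Bool)) (hx : mk x = 1) :
    mk (x ++ y) = mk y := by
  rw [← mul_mk, hx, one_mul]

def IsFirstPassage (g : FreeGroup α) (w : List (α × Bool)) : Prop :=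
  mk w = g ∧ ∀ k < w.length, mk (w.take k) ≠ g

theorem exists_append_isFirstPassage {g : FreeGroup α} {w : List (α × Bool)}
    (h : ∃ k, mk (w.take k) = g) : ∃ u v, w = u ++ v ∧ IsFirstPassage g u := by
  classical
  refine ⟨w.take (Nat.find h), w.drop (Nat.find h), (List.take_append_drop _ _).symm,
    Nat.find_spec h, fun j hj => ?_⟩
  have hjk : j < Nat.find h := by rw [List.length_take] at hj; omega
  rw [List.take_take, min_eq_left hjk.le]
  exact Nat.find_min h hjk

theorem IsFirstPassage.of_append {g : FreeGroup α} {x v : List (α × Bool)}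
    (h : IsFirstPassage g (x ++ v)) (hx : mk x = 1) : IsFirstPassage g v := by
  refine ⟨(mk_append_of_mk_eq_one v hx).symm.trans h.1, fun k hk => ?_⟩
  have := h.2 (x.length + k) (by simp [hk])
  rwa [List.take_length_add_append, mk_append_of_mk_eq_one _ hx] at this

theorem IsFirstPassage.eq_nil_of_cons {c : α × Bool} {w : List (α × Bool)}
    (h : IsFirstPassage (mk [c]) (c :: w)) : w = [] := by
  by_contra hw
  exact h.2 1 (by simpa [List.length_pos_iff] using hw) rfl

variable [DecidableEq α]

theorem mk_cons_mem_startsWith (c : α × Bool) (x : List (α × Bool))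
    (h : ∀ k, mk (c :: x.take k) ≠ 1) : mk (c :: x) ∈ startsWith c := by
  induction hx : x.length using Nat.strong_induction_on generalizing c x with
  | _ m ih =>
  match x with
  | [] => simp [startsWith]
  | d :: x' =>
    by_cases hd : ∃ k, mk (d :: x'.take k) = 1
    · -- the walk `d x'` returns to `1` after `d :: x'.take k`; drop that loop
      obtain ⟨k, hk⟩ := hd
      have hskip : ∀ j, mk (c :: (d :: x').take (k + 1 + j)) = mk (c :: (x'.drop k).take j) := by
        intro j
        rw [Nat.add_right_comm, List.take_succ_cons, List.take_add, mk_cons, ← List.cons_append,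
          mk_append_of_mk_eq_one _ hk, ← mk_cons]
      have hlen : (x'.drop k).length < m := by simp at hx ⊢; omega
      have hmk := hskip x'.length
      rw [List.take_of_length_le (by simp), List.take_of_length_le (by simp)] at hmk
      rw [hmk]
      exact ih _ hlen c (x'.drop k) (fun j => hskip j ▸ h (k + 1 + j)) rfl
    · push Not at hd
      have hdc : d ≠ (c.1, !c.2) := by
        rintro rfl
        exact h 1 (by simpa [mul_mk, invRev] using (mul_inv_cancel (mk [c])))
      rw [mk_cons]
      refine startsWith_mk_mul _ fun hmem => ?_
      exact ((startsWith.disjoint_iff_ne.mpr hdc).notMem_of_mem_left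
        (ih _ (by simp at hx; omega) d x' hd rfl)) hmem

theorem exists_mk_cons_take_eq_one {c t : α × Bool} {x : List (α × Bool)}
    (h : mk (c :: x) = mk [t]) (hct : c ≠ t) : ∃ k, mk (c :: x.take k) = 1 := by
  by_contra! hne
  have := mk_cons_mem_startsWith c x hne
  rw [h] at this
  simp [startsWith] at this
  exact hct this.symm

end FreeGroup

namespace trivGrammar

open FreeGroup

variable {n : ℕ}

def stopRule (n : ℕ) : ContextFreeRule (Fin n × Bool) (trivGrammar n).NT := ⟨none, []⟩

def loopRule (c : Fin n × Bool) : ContextFreeRule (Fin n × Bool) (trivGrammar n).NT :=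
  ⟨none, [.terminal c, .nonterminal (some (letterInv c)), .nonterminal none]⟩

def arriveRule (t : Fin n × Bool) : ContextFreeRule (Fin n × Bool) (trivGrammar n).NT :=
  ⟨some t, [.terminal t]⟩

def detourRule (t c : Fin n × Bool) : ContextFreeRule (Fin n × Bool) (trivGrammar n).NT :=
  ⟨some t, [.terminal c, .nonterminal (some (letterInv c)), .nonterminal (some t)]⟩

theorem mem_rules_iff {r : ContextFreeRule (Fin n × Bool) (trivGrammar n).NT} :
    r ∈ (trivGrammar n).rules ↔ r = stopRule n ∨ (∃ c, r = loopRule c) ∨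
      (∃ t, r = arriveRule t) ∨ ∃ t c, c ≠ t ∧ r = detourRule t c := by
  revert r
  show ∀ r : ContextFreeRule (Fin n × Bool) (TrivNT n), r ∈ (trivRules n).toFinset ↔ _
  intro r
  simp only [trivRules, List.mem_toFinset, List.mem_append, List.mem_singleton, List.mem_map,
    List.mem_filterMap, Finset.mem_toList, Finset.mem_univ, true_and]
  constructor
  · rintro (((rfl | ⟨c, rfl⟩) | ⟨t, rfl⟩) | ⟨⟨t, c⟩, h⟩)
    · exact .inl rfl
    · exact .inr (.inl ⟨c, rfl⟩)
    · exact .inr (.inr (.inl ⟨t, rfl⟩))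
    · split_ifs at h with hct
      cases h
      exact .inr (.inr (.inr ⟨t, c, hct, rfl⟩))
  · rintro (rfl | ⟨c, rfl⟩ | ⟨t, rfl⟩ | ⟨t, c, hct, rfl⟩)
    · exact .inl (.inl (.inl rfl))
    · exact .inl (.inl (.inr ⟨c, rfl⟩))
    · exact .inl (.inr ⟨t, rfl⟩)
    · exact .inr ⟨(t, c), by rw [if_neg hct]; rfl⟩

def symbolValue : Symbol (Fin n × Bool) (trivGrammar n).NT → FreeGroup (Fin n)
  | .terminal c => mk [c]
  | .nonterminal none => 1
  | .nonterminal (some t) => mk [t]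

theorem mk_letterInv (c : Fin n × Bool) : mk [letterInv c] = (mk [c])⁻¹ := by
  simp [inv_mk, invRev, letterInv]

theorem mk_cons_eq_one_iff {c : Fin n × Bool} {x : List (Fin n × Bool)} :
    mk (c :: x) = 1 ↔ mk x = mk [letterInv c] := by
  rw [mk_cons, mul_eq_one_iff_eq_inv', mk_letterInv]

theorem symbolValue_input {r : ContextFreeRule (Fin n × Bool) (trivGrammar n).NT}
    (hr : r ∈ (trivGrammar n).rules) :
    symbolValue (.nonterminal r.input) = (r.output.map symbolValue).prod := by
  rcases mem_rules_iff.1 hr with rfl | ⟨c, rfl⟩ | ⟨t, rfl⟩ | ⟨t, c, -, rfl⟩ <;>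
    simp [stopRule, loopRule, arriveRule, detourRule, symbolValue, mk_letterInv, -mul_mk, -inv_mk]

theorem prod_map_symbolValue_eq_of_derives {u v : List (Symbol (Fin n × Bool) (trivGrammar n).NT)}
    (h : (trivGrammar n).Derives u v) :
    (u.map symbolValue).prod = (v.map symbolValue).prod := by
  induction h with
  | refl => rfl
  | tail _ hp ih =>
    obtain ⟨r, hr, hrw⟩ := hp
    obtain ⟨p, q, rfl, rfl⟩ := hrw.exists_parts
    simp [ih, symbolValue_input hr, -mul_mk]

theorem prod_map_symbolValue_terminal (w : List (Fin n × Bool)) :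
    ((w.map Symbol.terminal).map symbolValue).prod = mk w := by
  induction w with
  | nil => rfl
  | cons c w ih => rw [mk_cons, ← ih]; rfl

theorem mk_eq_one_of_mem_language {w : List (Fin n × Bool)}
    (h : w ∈ (trivGrammar n).language) : mk w = 1 := by
  rw [← prod_map_symbolValue_terminal, ← prod_map_symbolValue_eq_of_derives h]
  rfl

theorem derives_loop {c : Fin n × Bool} {u v : List (Fin n × Bool)}
    (hu : (trivGrammar n).Derives [.nonterminal (some (letterInv c))] (u.map .terminal))
    (hv : (trivGrammar n).Derives [.nonterminal none] (v.map .terminal)) :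
    (trivGrammar n).Derives [.nonterminal none] ((c :: (u ++ v)).map .terminal) := by
  simpa [loopRule] using
    derives_terminal_cons_append (mem_rules_iff.2 (.inr (.inl ⟨c, rfl⟩))) rfl hu hv

theorem derives_detour {t c : Fin n × Bool} (hct : c ≠ t) {u v : List (Fin n × Bool)}
    (hu : (trivGrammar n).Derives [.nonterminal (some (letterInv c))] (u.map .terminal))
    (hv : (trivGrammar n).Derives [.nonterminal (some t)] (v.map .terminal)) :
    (trivGrammar n).Derives [.nonterminal (some t)] ((c :: (u ++ v)).map .terminal) := by
  simpa [detourRule] using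
    derives_terminal_cons_append (mem_rules_iff.2 (.inr (.inr (.inr ⟨t, c, hct, rfl⟩)))) rfl hu hv

theorem derives_of_mk_eq (w : List (Fin n × Bool)) :
    (mk w = 1 → (trivGrammar n).Derives [.nonterminal none] (w.map .terminal)) ∧
    ∀ t, IsFirstPassage (mk [t]) w →
      (trivGrammar n).Derives [.nonterminal (some t)] (w.map .terminal) := by
  induction hw : w.length using Nat.strong_induction_on generalizing w with
  | _ m ih =>
  match w with
  | [] =>
    refine ⟨fun _ => Produces.single ⟨stopRule n, mem_rules_iff.2 (.inl rfl),
      ContextFreeRule.Rewrites.input_output⟩, fun t ht => ?_⟩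
    exact absurd (reduce.sound ht.1) (by simp)
  | c :: w' =>
    have ih' : ∀ x : List (Fin n × Bool), x.length ≤ w'.length → _ :=
      fun x hx => ih _ (by simp at hw; omega) x rfl
    refine ⟨fun h => ?_, fun t ht => ?_⟩
    · obtain ⟨u, v, rfl, hu⟩ := exists_append_isFirstPassage (w := w') (g := mk [letterInv c])
        ⟨w'.length, by rw [List.take_length]; exact mk_cons_eq_one_iff.1 h⟩
      have hv : mk v = 1 := by
        rw [← mul_eq_left, mul_mk, hu.1, mk_cons_eq_one_iff.1 h]
      exact derives_loop ((ih' u (by simp)).2 _ hu) ((ih' v (by simp)).1 hv)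
    · rcases eq_or_ne c t with rfl | hct
      · rw [ht.eq_nil_of_cons]
        exact Produces.single ⟨arriveRule c, mem_rules_iff.2 (.inr (.inr (.inl ⟨c, rfl⟩))),
          ContextFreeRule.Rewrites.input_output⟩
      obtain ⟨k, hk⟩ := exists_mk_cons_take_eq_one ht.1 hct
      obtain ⟨u, v, rfl, hu⟩ := exists_append_isFirstPassage (w := w') (g := mk [letterInv c])
        ⟨k, mk_cons_eq_one_iff.1 hk⟩
      have hv : IsFirstPassage (mk [t]) v :=
        IsFirstPassage.of_append (x := c :: u) ht (mk_cons_eq_one_iff.2 hu.1)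
      exact derives_detour hct ((ih' u (by simp)).2 _ hu) ((ih' v (by simp)).2 _ hv)

-- `(trivGrammar n).NT` is not reducibly `Option _`, so the `Option` simp lemmas miss it.
@[simp] theorem some_inj {t t' : Fin n × Bool} :
    @Eq (trivGrammar n).NT (some t) (some t') ↔ t = t' :=
  Option.some_inj

@[simp] theorem nonterminal_none_ne_nonterminal_some (t : Fin n × Bool) :
    (.nonterminal none : Symbol (Fin n × Bool) (trivGrammar n).NT) ≠ .nonterminal (some t) :=
  nofun

theorem output_eq_nil_or_eq_terminal_cons {r : ContextFreeRule (Fin n × Bool) (trivGrammar n).NT}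
    (hr : r ∈ (trivGrammar n).rules) :
    r.output = [] ∨ ∃ a o, r.output = .terminal a :: o := by
  rcases mem_rules_iff.1 hr with rfl | ⟨c, rfl⟩ | ⟨t, rfl⟩ | ⟨t, c, -, rfl⟩ <;>
    simp [stopRule, loopRule, arriveRule, detourRule]

theorem eq_of_input_eq_of_head?_eq {r₁ r₂ : ContextFreeRule (Fin n × Bool) (trivGrammar n).NT}
    (hr₁ : r₁ ∈ (trivGrammar n).rules) (hr₂ : r₂ ∈ (trivGrammar n).rules)
    (hinput : r₁.input = r₂.input) (hhead : r₁.output.head? = r₂.output.head?) : r₁ = r₂ := by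
  rcases mem_rules_iff.1 hr₁ with rfl | ⟨c, rfl⟩ | ⟨t, rfl⟩ | ⟨t, c, hct, rfl⟩ <;>
  rcases mem_rules_iff.1 hr₂ with rfl | ⟨c', rfl⟩ | ⟨t', rfl⟩ | ⟨t', c', hct', rfl⟩ <;>
    simp_all [stopRule, loopRule, arriveRule, detourRule]

def InitialAtEnd (u : List (Symbol (Fin n × Bool) (trivGrammar n).NT)) : Prop :=
  .nonterminal none ∉ u.dropLast

theorem InitialAtEnd.eq_nil {p q : List (Symbol (Fin n × Bool) (trivGrammar n).NT)}
    (h : InitialAtEnd (p ++ .nonterminal none :: q)) : q = [] := by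
  cases q with
  | nil => rfl
  | cons b q => simp [InitialAtEnd] at h

theorem InitialAtEnd.eq_nil_of_output_eq_nil
    {r : ContextFreeRule (Fin n × Bool) (trivGrammar n).NT} (hr : r ∈ (trivGrammar n).rules)
    {p q : List (Symbol (Fin n × Bool) (trivGrammar n).NT)}
    (h : InitialAtEnd (p ++ .nonterminal r.input :: q)) (hr₀ : r.output = []) : q = [] := by
  rcases mem_rules_iff.1 hr with rfl | ⟨c, rfl⟩ | ⟨t, rfl⟩ | ⟨t, c, -, rfl⟩
  · exact h.eq_nil
  all_goals simp [loopRule, arriveRule, detourRule] at hr₀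

theorem InitialAtEnd.rewrite {r : ContextFreeRule (Fin n × Bool) (trivGrammar n).NT}
    (hr : r ∈ (trivGrammar n).rules) {p q : List (Symbol (Fin n × Bool) (trivGrammar n).NT)}
    (hp : ∀ s ∈ p, ∃ a, s = .terminal a) (h : InitialAtEnd (p ++ .nonterminal r.input :: q)) :
    InitialAtEnd (p ++ r.output ++ q) := by
  have hpS : .nonterminal none ∉ p := fun hS => by obtain ⟨a, ha⟩ := hp _ hS; cases ha
  rcases mem_rules_iff.1 hr with rfl | ⟨c, rfl⟩ | ⟨t, rfl⟩ | ⟨t, c, -, rfl⟩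
  · rw [h.eq_nil]
    simpa [InitialAtEnd, stopRule] using fun hS => hpS (List.dropLast_subset _ hS)
  · rw [h.eq_nil]
    simp [InitialAtEnd, loopRule, hpS]
  all_goals
    cases q with
    | nil => simp [InitialAtEnd, arriveRule, detourRule, hpS]
    | cons b q => simp_all [InitialAtEnd, arriveRule, detourRule]

theorem language_eq (n : ℕ) :
    (trivGrammar n).language = { w : List (Fin n × Bool) | mk w = 1 } :=
  Set.ext fun w => ⟨mk_eq_one_of_mem_language, (derives_of_mk_eq w).1⟩

theorem unambiguous (n : ℕ) : Unambiguous (trivGrammar n) := fun _ _ _ =>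
  LeftmostDerivation.eq_of_predictive InitialAtEnd
    (fun _ => output_eq_nil_or_eq_terminal_cons)
    (fun _ hr₁ _ hr₂ => eq_of_input_eq_of_head?_eq hr₁ hr₂)
    (fun _ hr _ _ => InitialAtEnd.eq_nil_of_output_eq_nil hr)
    (fun _ hr _ _ hp => InitialAtEnd.rewrite hr hp)
    (by simp [InitialAtEnd])

end trivGrammar

/-- The explicit grammar above generates exactly the language of all words over
`{a₁^{±1},…,aₙ^{±1}}` representing the identity of the free group `Fₙ`, and it is
unambiguous. -/
theorem stmt8 (n : ℕ) :
    (trivGrammar n).language = { w : List (Fin n × Bool) | FreeGroup.mk w = 1 } ∧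
    Unambiguous (trivGrammar n) :=
  ⟨trivGrammar.language_eq n, trivGrammar.unambiguous n⟩
end

section
/- Let H ≤ F_n be a finitely generated subgroup of rank at least 2 with basis h_1,...,h_r, let g ∈ F_n, and suppose there exist nontrivial equations w ∈ I_g of degree d and w' ∈ I_g of degree d'. Then for every k ≥ 0, the number ρ_{g,d+d'+2k}(M) of cyclically reduced words of length at most M over {h_1^{±1},...,h_r^{±1}, x^{±1}} representing equations in I_g of degree d+d'+2k grows exponentially in M; that is, there exist α, β > 0 with e^{αM} ≤ ρ_{g,d+d'+2k}(M) ≤ e^{βM} for all sufficiently large M. -/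
/-!
Conjugate `w` and `w'` by two-letter words in `h₀^{±1}, h₁^{±1}` to get reduced words `W`, `W'`
in `I_g` such that `W` begins with a negative and ends with a positive exponent, and `W'` does
the opposite. For a positive word `v = h_{f 1} ⋯ h_{f m} x^k` the equation `W v W' v⁻¹` has degree
`d + d' + 2k` and length `|w| + |w'| + 8 + 2(m + k)`, and it is cyclically reduced because every
junction, including the cyclic one, joins two letters with the same exponent. The `r ^ m`
choices of `f` give distinct equations, hence the exponential lower bound; the upper bound just
counts all words of length at most `M`.
-/

/-- The number of occurrences of `x` and `x⁻¹` in a word over the basis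
`h₁,…,h_r,x` (encoded as `Fin r ⊕ Unit`, with `Sum.inr ()` being `x`) of `H * ⟨x⟩`. -/
def xcount {r : ℕ} (w : List ((Fin r ⊕ Unit) × Bool)) : ℕ :=
  w.countP fun l => match l.1 with | Sum.inr _ => true | Sum.inl _ => false

/-- A word is cyclically reduced iff its double is a reduced word. -/
def CyclicallyReduced {r : ℕ} (w : List ((Fin r ⊕ Unit) × Bool)) : Prop :=
  FreeGroup.reduce (w ++ w) = w ++ w

/-- `rhoD φ d M` counts the cyclically reduced words of length at most `M` over the basis
of `H * ⟨x⟩` that represent an equation in `I_g = ker φ` of degree `d`. -/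
noncomputable def rhoD {n r : ℕ} (φ : FreeGroup (Fin r ⊕ Unit) →* FreeGroup (Fin n))
    (d M : ℕ) : ℕ :=
  Set.ncard { w : List ((Fin r ⊕ Unit) × Bool) |
    w.length ≤ M ∧ CyclicallyReduced w ∧ xcount w = d ∧ FreeGroup.mk w ∈ MonoidHom.ker φ }

/-- `rho φ M` counts the cyclically reduced words of length at most `M` representing an
equation in `I_g = ker φ`. -/
noncomputable def rho {n r : ℕ} (φ : FreeGroup (Fin r ⊕ Unit) →* FreeGroup (Fin n))
    (M : ℕ) : ℕ :=
  Set.ncard { w : List ((Fin r ⊕ Unit) × Bool) |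
    w.length ≤ M ∧ CyclicallyReduced w ∧ FreeGroup.mk w ∈ MonoidHom.ker φ }

namespace FreeGroup

variable {α : Type*} {p q s : Bool} {L L₁ L₂ : List (α × Bool)}

/-- The clause `L = [] → p = q` lets `IsReducedBetween.append` hold without nonemptiness
conditions. -/
def IsReducedBetween (p q : Bool) (L : List (α × Bool)) : Prop :=
  IsReduced L ∧ (L = [] → p = q) ∧ (∀ a ∈ L.head?, a.2 = p) ∧ ∀ a ∈ L.getLast?, a.2 = q

theorem isReducedBetween_of_forall (h : ∀ a ∈ L, a.2 = p) : IsReducedBetween p p L :=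
  ⟨(List.pairwise_of_forall_mem_list (r := fun a b : α × Bool => a.1 = b.1 → a.2 = b.2)
      fun a ha b hb _ => (h a ha).trans (h b hb).symm).isChain,
    fun _ => rfl, fun a ha => h a (List.mem_of_mem_head? ha),
    fun a ha => h a (List.mem_of_mem_getLast? ha)⟩

theorem IsReducedBetween.append (h₁ : IsReducedBetween p q L₁) (h₂ : IsReducedBetween q s L₂) :
    IsReducedBetween p s (L₁ ++ L₂) := by
  obtain ⟨hr₁, he₁, hh₁, hl₁⟩ := h₁
  obtain ⟨hr₂, he₂, hh₂, hl₂⟩ := h₂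
  refine ⟨hr₁.append hr₂ fun a ha b hb _ => (hl₁ a ha).trans (hh₂ b hb).symm,
    fun h => ?_, fun a ha => ?_, fun a ha => ?_⟩
  · obtain ⟨rfl, rfl⟩ := List.append_eq_nil_iff.mp h
    exact (he₁ rfl).trans (he₂ rfl)
  · by_cases hL₁ : L₁ = []
    · subst hL₁
      exact (hh₂ a ha).trans (he₁ rfl).symm
    · exact hh₁ a (by rwa [List.head?_append_of_ne_nil _ hL₁] at ha)
  · by_cases hL₂ : L₂ = []
    · subst hL₂
      exact (hl₁ a (by simpa using ha)).trans (he₂ rfl)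
    · exact hl₂ a (by rwa [List.getLast?_append_of_ne_nil _ hL₂] at ha)

theorem IsReducedBetween.invRev [DecidableEq α] (h : IsReducedBetween p q L) :
    IsReducedBetween (!q) (!p) (invRev L) := by
  obtain ⟨hr, he, hh, hl⟩ := h
  refine ⟨?_, fun h' => ?_, fun a ha => ?_, fun a ha => ?_⟩
  · rw [isReduced_iff_reduce_eq, reduce_invRev, hr.reduce_eq]
  · rw [he (by simpa [FreeGroup.invRev] using h')]
  · simp only [FreeGroup.invRev, List.head?_reverse, List.getLast?_map, Option.mem_def,
      Option.map_eq_some_iff] at ha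
    obtain ⟨b, hb, rfl⟩ := ha
    simp [hl b hb]
  · simp only [FreeGroup.invRev, List.getLast?_reverse, List.head?_map, Option.mem_def,
      Option.map_eq_some_iff] at ha
    obtain ⟨b, hb, rfl⟩ := ha
    simp [hh b hb]

theorem IsReducedBetween.isCyclicallyReduced (h : IsReducedBetween p p L) :
    IsCyclicallyReduced L :=
  ⟨h.1, fun a ha b hb _ => (h.2.2.2 a ha).trans (h.2.2.1 b hb).symm⟩

theorem exists_fst_eq_or_eq_and_ne_and_ne {a₀ a₁ : α} (h : a₀ ≠ a₁) (e₀ e₁ : α × Bool) :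
    ∃ b : α × Bool, (b.1 = a₀ ∨ b.1 = a₁) ∧ b ≠ e₀ ∧ b ≠ e₁ := by
  by_contra! H
  obtain ⟨x₀, c₀⟩ := e₀
  obtain ⟨x₁, c₁⟩ := e₁
  have h₀ := H (a₀, true) (.inl rfl)
  have h₁ := H (a₀, false) (.inl rfl)
  have h₂ := H (a₁, true) (.inr rfl)
  have h₃ := H (a₁, false) (.inr rfl)
  simp only [ne_eq, Prod.mk.injEq] at h₀ h₁ h₂ h₃
  cases c₀ <;> cases c₁ <;> grind

theorem isReduced_pair_append_invRev {a : α} {b x y : α × Bool} (hab : a ≠ b.1) (hL : IsReduced L)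
    (hL₀ : L ≠ []) (hx : L.head? = some x) (hy : L.getLast? = some y)
    (hbx : b ≠ (x.1, !x.2)) (hby : b ≠ y) :
    IsReduced ([(a, s), b] ++ L ++ invRev [(a, s), b]) := by
  have hinv : invRev [(a, s), b] = [(b.1, !b.2), (a, !s)] := by simp [invRev]
  rw [hinv, List.append_assoc, List.cons_append, List.cons_append, List.nil_append,
    isReduced_cons_cons]
  refine ⟨fun e => absurd e hab, List.isChain_cons.mpr ⟨?_, hL.append ?_ ?_⟩⟩
  · rw [List.head?_append_of_ne_nil _ hL₀, hx]
    rintro _ ⟨⟩ e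
    obtain ⟨b₁, b₂⟩ := b
    cases x
    cases b₂ <;> simp_all
  · simp [Ne.symm hab]
  · rw [hy]
    rintro _ ⟨⟩ _ ⟨⟩ e
    obtain ⟨b₁, b₂⟩ := b
    cases y
    cases b₂ <;> simp_all

theorem exists_isReducedBetween_conj {a₀ a₁ : α} (h : a₀ ≠ a₁) (s : Bool)
    (hL : IsReduced L) (hL₀ : L ≠ []) :
    ∃ u : List (α × Bool), u.length = 2 ∧ (∀ c ∈ u, c.1 = a₀ ∨ c.1 = a₁) ∧
      IsReducedBetween s (!s) (u ++ L ++ invRev u) := by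
  obtain ⟨x, hx⟩ : ∃ x, L.head? = some x := ⟨_, List.head?_eq_some_head hL₀⟩
  obtain ⟨y, hy⟩ : ∃ y, L.getLast? = some y := ⟨_, List.getLast?_eq_some_getLast hL₀⟩
  obtain ⟨b, hb, hbx, hby⟩ := exists_fst_eq_or_eq_and_ne_and_ne h (x.1, !x.2) y
  obtain ⟨a, ha, hab⟩ : ∃ a, (a = a₀ ∨ a = a₁) ∧ a ≠ b.1 := by
    rcases hb with hb | hb
    exacts [⟨a₁, .inr rfl, hb ▸ h.symm⟩, ⟨a₀, .inl rfl, hb ▸ h⟩]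
  refine ⟨[(a, s), b], rfl, ?_, isReduced_pair_append_invRev hab hL hL₀ hx hy hbx hby, by simp,
    by simp, ?_⟩
  · simp only [List.mem_cons, List.not_mem_nil, or_false]
    rintro c (rfl | rfl)
    exacts [ha, hb]
  · rw [List.getLast?_append_of_ne_nil _ (by simp [invRev])]
    simp [invRev]

theorem mk_append_append_invRev (u L : List (α × Bool)) :
    mk (u ++ L ++ invRev u) = mk u * mk L * (mk u)⁻¹ := by
  rw [inv_mk, mul_mk, mul_mk]

theorem mk_append_append_append_invRev_mem {K : Subgroup (FreeGroup α)} [K.Normal]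
    {W W' : List (α × Bool)} (hW : mk W ∈ K) (hW' : mk W' ∈ K) (V : List (α × Bool)) :
    mk (W ++ V ++ W' ++ invRev V) ∈ K := by
  rw [show W ++ V ++ W' ++ invRev V = W ++ (V ++ W' ++ invRev V) by simp, ← mul_mk,
    mk_append_append_invRev]
  exact mul_mem hW (Subgroup.Normal.conj_mem inferInstance _ hW' _)

theorem isCyclicallyReduced_append_append_append_invRev [DecidableEq α] {W W' V : List (α × Bool)}
    (hW : IsReducedBetween false true W) (hW' : IsReducedBetween true false W')
    (hV : ∀ c ∈ V, c.2 = true) : IsCyclicallyReduced (W ++ V ++ W' ++ invRev V) :=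
  (((hW.append (isReducedBetween_of_forall hV)).append hW').append
    (isReducedBetween_of_forall hV).invRev).isCyclicallyReduced

end FreeGroup

theorem ncard_le_card_add_one_pow_of_length_le {α : Type*} [Fintype α] {S : Set (List α)}
    {M : ℕ} (hS : ∀ l ∈ S, l.length ≤ M) : S.ncard ≤ (Fintype.card α + 1) ^ M := by
  have hinj : Set.InjOn (fun (l : List α) (i : Fin M) => l[(i : ℕ)]?) S := by
    intro l₁ h₁ l₂ h₂ h
    refine List.ext_getElem? fun i => ?_
    rcases lt_or_ge i M with hi | hi
    · exact congrFun h ⟨i, hi⟩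
    · rw [List.getElem?_eq_none ((hS l₁ h₁).trans hi), List.getElem?_eq_none ((hS l₂ h₂).trans hi)]
  simpa using Set.ncard_le_ncard_of_injOn _ (fun _ _ => Set.mem_univ _) hinj Set.finite_univ

theorem exists_exp_le_of_pow_le {ρ : ℕ → ℕ} {b C : ℕ} (hb : 1 < b)
    (h : ∀ M, C ≤ M → b ^ ((M - C) / 2) ≤ ρ M) :
    ∃ α : ℝ, 0 < α ∧ ∀ M, 2 * C + 2 ≤ M → Real.exp (α * M) ≤ ρ M := by
  have hlog : 0 < Real.log b := Real.log_pos (by exact_mod_cast hb)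
  refine ⟨Real.log b / 4, by positivity, fun M hM => ?_⟩
  have hm : (M : ℝ) / 4 ≤ ((M - C) / 2 : ℕ) := by
    rw [div_le_iff₀ (by norm_num)]
    exact_mod_cast (by omega : M ≤ (M - C) / 2 * 4)
  calc Real.exp (Real.log b / 4 * M) ≤ Real.exp (((M - C) / 2 : ℕ) * Real.log b) := by
        refine Real.exp_le_exp.mpr ?_
        nlinarith [mul_le_mul_of_nonneg_left hm hlog.le]
    _ = (b ^ ((M - C) / 2) : ℕ) := by
        rw [Real.exp_nat_mul, Real.exp_log (by positivity)]
        push_cast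
        rfl
    _ ≤ ρ M := by exact_mod_cast h M (by omega)

theorem exists_le_exp_of_le_pow {ρ : ℕ → ℕ} {N : ℕ} (hN : 1 < N) (h : ∀ M, ρ M ≤ N ^ M) :
    ∃ β : ℝ, 0 < β ∧ ∀ M : ℕ, (ρ M : ℝ) ≤ Real.exp (β * M) := by
  refine ⟨Real.log N, Real.log_pos (by exact_mod_cast hN), fun M => ?_⟩
  rw [mul_comm, Real.exp_nat_mul, Real.exp_log (by positivity)]
  exact_mod_cast h M

section Equations

variable {n r : ℕ}

theorem cyclicallyReduced_iff_isCyclicallyReduced {w : List ((Fin r ⊕ Unit) × Bool)} :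
    CyclicallyReduced w ↔ FreeGroup.IsCyclicallyReduced w := by
  rw [CyclicallyReduced, ← FreeGroup.isReduced_iff_reduce_eq, FreeGroup.IsReduced,
    List.isChain_append, FreeGroup.isCyclicallyReduced_iff, FreeGroup.IsReduced]
  tauto

theorem xcount_append (L₁ L₂ : List ((Fin r ⊕ Unit) × Bool)) :
    xcount (L₁ ++ L₂) = xcount L₁ + xcount L₂ :=
  List.countP_append

theorem xcount_invRev (L : List ((Fin r ⊕ Unit) × Bool)) :
    xcount (FreeGroup.invRev L) = xcount L := by
  rw [xcount, FreeGroup.invRev, List.countP_reverse, List.countP_map]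
  rfl

theorem xcount_eq_zero_of_forall_isLeft {L : List ((Fin r ⊕ Unit) × Bool)}
    (h : ∀ a ∈ L, a.1.isLeft) : xcount L = 0 := by
  refine List.countP_eq_zero.mpr fun a ha => ?_
  rcases a with ⟨i | i, b⟩
  · simp
  · simpa using h _ ha

theorem xcount_ofFn_inl_append_replicate_inr {m : ℕ} (f : Fin m → Fin r) (b : Bool) (k : ℕ) :
    xcount (List.ofFn (fun j => (Sum.inl (f j), b)) ++ List.replicate k (Sum.inr (), b)) = k := by
  simp [xcount, List.countP_replicate]

theorem rhoD_le_pow (φ : FreeGroup (Fin r ⊕ Unit) →* FreeGroup (Fin n)) (d M : ℕ) :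
    rhoD φ d M ≤ (Fintype.card ((Fin r ⊕ Unit) × Bool) + 1) ^ M :=
  ncard_le_card_add_one_pow_of_length_le fun _ h => h.1

theorem card_le_rhoD_of_injective {ι : Type*} [Finite ι]
    {φ : FreeGroup (Fin r ⊕ Unit) →* FreeGroup (Fin n)} {d M : ℕ}
    (F : ι → List ((Fin r ⊕ Unit) × Bool)) (hF : Function.Injective F)
    (hmem : ∀ i, (F i).length ≤ M ∧ CyclicallyReduced (F i) ∧ xcount (F i) = d ∧
      FreeGroup.mk (F i) ∈ φ.ker) :
    Nat.card ι ≤ rhoD φ d M := by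
  rw [← Set.ncard_univ]
  exact Set.ncard_le_ncard_of_injOn F (fun i _ => hmem i) hF.injOn
    ((List.finite_length_le _ M).subset fun _ h => h.1)

theorem exists_isReducedBetween_mem_ker (hr : 2 ≤ r)
    (φ : FreeGroup (Fin r ⊕ Unit) →* FreeGroup (Fin n)) (s : Bool)
    {w : List ((Fin r ⊕ Unit) × Bool)} (hw : CyclicallyReduced w) (hw₀ : w ≠ [])
    (hwφ : FreeGroup.mk w ∈ φ.ker) :
    ∃ W : List ((Fin r ⊕ Unit) × Bool), W.length = w.length + 4 ∧ xcount W = xcount w ∧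
      FreeGroup.mk W ∈ φ.ker ∧ FreeGroup.IsReducedBetween s (!s) W := by
  have h01 : (Sum.inl ⟨0, by omega⟩ : Fin r ⊕ Unit) ≠ Sum.inl ⟨1, by omega⟩ := by simp
  obtain ⟨u, hu₂, hu, hW⟩ := FreeGroup.exists_isReducedBetween_conj h01 s
    (cyclicallyReduced_iff_isCyclicallyReduced.mp hw).isReduced hw₀
  have hxu : xcount u = 0 := xcount_eq_zero_of_forall_isLeft fun c hc => by
    rcases hu c hc with h | h <;> simp [h]
  refine ⟨u ++ w ++ FreeGroup.invRev u, ?_, ?_, ?_, hW⟩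
  · simp [FreeGroup.invRev_length, hu₂]
    omega
  · simp [xcount_append, xcount_invRev, hxu]
  · rw [FreeGroup.mk_append_append_invRev]
    exact φ.normal_ker.conj_mem _ hwφ _

theorem pow_le_rhoD (hr : 2 ≤ r) (φ : FreeGroup (Fin r ⊕ Unit) →* FreeGroup (Fin n))
    {w w' : List ((Fin r ⊕ Unit) × Bool)}
    (hw : CyclicallyReduced w) (hw₀ : w ≠ []) (hwφ : FreeGroup.mk w ∈ φ.ker)
    (hw' : CyclicallyReduced w') (hw'₀ : w' ≠ []) (hw'φ : FreeGroup.mk w' ∈ φ.ker) {k M : ℕ}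
    (hM : w.length + w'.length + 2 * k + 8 ≤ M) :
    r ^ ((M - (w.length + w'.length + 2 * k + 8)) / 2) ≤
      rhoD φ (xcount w + xcount w' + 2 * k) M := by
  obtain ⟨W, hWl, hWx, hWφ, hW⟩ := exists_isReducedBetween_mem_ker hr φ false hw hw₀ hwφ
  obtain ⟨W', hW'l, hW'x, hW'φ, hW'⟩ := exists_isReducedBetween_mem_ker hr φ true hw' hw'₀ hw'φ
  set m := (M - (w.length + w'.length + 2 * k + 8)) / 2
  let V : (Fin m → Fin r) → List ((Fin r ⊕ Unit) × Bool) := fun f =>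
    List.ofFn (fun j => (Sum.inl (f j), true)) ++ List.replicate k (Sum.inr (), true)
  let F f := W ++ V f ++ W' ++ FreeGroup.invRev (V f)
  have hVpos : ∀ f, ∀ c ∈ V f, c.2 = true := by
    intro f c hc
    rcases List.mem_append.mp hc with hc | hc
    · obtain ⟨j, rfl⟩ := List.mem_ofFn.mp hc
      rfl
    · rw [(List.mem_replicate.mp hc).2]
  have hF : Function.Injective F := by
    intro f₁ f₂ h
    have hV := List.append_cancel_left (List.append_inj_left (List.append_inj_left h (by simp [V]))
      (by simp [V]))
    funext j
    simpa using congrFun (List.ofFn_injective (List.append_inj_left hV (by simp))) j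
  calc r ^ m = Nat.card (Fin m → Fin r) := by simp
    _ ≤ _ := card_le_rhoD_of_injective F hF fun f => ⟨?_, ?_, ?_, ?_⟩
  · have hm : 2 * m ≤ M - (w.length + w'.length + 2 * k + 8) := Nat.mul_div_le _ 2
    simp [F, V, FreeGroup.invRev_length, hWl, hW'l]
    omega
  · exact cyclicallyReduced_iff_isCyclicallyReduced.mpr
      (FreeGroup.isCyclicallyReduced_append_append_append_invRev hW hW' (hVpos f))
  · simp only [F, xcount_append, xcount_invRev, hWx, hW'x,
      show xcount (V f) = k from xcount_ofFn_inl_append_replicate_inr f true k]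
    ring
  · exact FreeGroup.mk_append_append_append_invRev_mem hWφ hW'φ _

end Equations

theorem stmt12_general {n r : ℕ} (hr : 2 ≤ r) (h : Fin r → FreeGroup (Fin n))
    (g : FreeGroup (Fin n))
    (d d' k : ℕ) (w w' : List ((Fin r ⊕ Unit) × Bool))
    (hw : CyclicallyReduced w) (hw0 : w ≠ [])
    (hwker : FreeGroup.mk w ∈ MonoidHom.ker (FreeGroup.lift (Sum.elim h fun _ => g)))
    (hwd : xcount w = d)
    (hw' : CyclicallyReduced w') (hw'0 : w' ≠ [])
    (hw'ker : FreeGroup.mk w' ∈ MonoidHom.ker (FreeGroup.lift (Sum.elim h fun _ => g)))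
    (hw'd : xcount w' = d') :
    ∃ α β : ℝ, 0 < α ∧ 0 < β ∧ ∃ M₀ : ℕ, ∀ M : ℕ, M₀ ≤ M →
      Real.exp (α * M) ≤ (rhoD (FreeGroup.lift (Sum.elim h fun _ => g)) (d + d' + 2 * k) M : ℝ) ∧
      (rhoD (FreeGroup.lift (Sum.elim h fun _ => g)) (d + d' + 2 * k) M : ℝ) ≤ Real.exp (β * M) := by
  subst hwd hw'd
  obtain ⟨α, hα, hlow⟩ := exists_exp_le_of_pow_le (by omega : 1 < r) fun _ hM =>
    pow_le_rhoD hr _ hw hw0 hwker hw' hw'0 hw'ker hM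
  obtain ⟨β, hβ, hup⟩ := exists_le_exp_of_le_pow (by simp) (rhoD_le_pow _ _)
  exact ⟨α, β, hα, hβ, _, fun M hM => ⟨hlow M hM, hup M⟩⟩

/-- If `H ≤ Fₙ` has rank `r ≥ 2` (with basis `h`) and `I_g` contains nontrivial
equations of degrees `d` and `d'` (witnessed by nonempty cyclically reduced words `w`,
`w'` in the kernel), then for every `k ≥ 0` the counting function
`ρ_{g,d+d'+2k}` grows exponentially. -/
theorem stmt12 {n r : ℕ} (hr : 2 ≤ r) (h : Fin r → FreeGroup (Fin n))
    (hbasis : Function.Injective (FreeGroup.lift h)) (g : FreeGroup (Fin n))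
    (d d' k : ℕ) (w w' : List ((Fin r ⊕ Unit) × Bool))
    (hw : CyclicallyReduced w) (hw0 : w ≠ [])
    (hwker : FreeGroup.mk w ∈ MonoidHom.ker (FreeGroup.lift (Sum.elim h fun _ => g)))
    (hwd : xcount w = d)
    (hw' : CyclicallyReduced w') (hw'0 : w' ≠ [])
    (hw'ker : FreeGroup.mk w' ∈ MonoidHom.ker (FreeGroup.lift (Sum.elim h fun _ => g)))
    (hw'd : xcount w' = d') :
    ∃ α β : ℝ, 0 < α ∧ 0 < β ∧ ∃ M₀ : ℕ, ∀ M : ℕ, M₀ ≤ M →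
      Real.exp (α * M) ≤ (rhoD (FreeGroup.lift (Sum.elim h fun _ => g)) (d + d' + 2 * k) M : ℝ) ∧
      (rhoD (FreeGroup.lift (Sum.elim h fun _ => g)) (d + d' + 2 * k) M : ℝ) ≤ Real.exp (β * M) :=
  stmt12_general hr h g d d' k w w' hw hw0 hwker hwd hw' hw'0 hw'ker hw'd
end

section
/- Let H ≤ F_n be finitely generated of rank at least 2 and g ∈ F_n with I_g nontrivial. Then the function ρ_g(M), counting cyclically reduced words over the basis {h_1^{±1},...,h_r^{±1},x^{±1}} of H * ⟨x⟩ of length at most M that lie in I_g, has exponential growth: there exist α, β > 0 with e^{αM} ≤ ρ_g(M) ≤ e^{βM} for all large M. -/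
open Function List

theorem List.flatMap_injective_of_length_eq {α β : Type*} {f : α → List β} (hf : Injective f)
    {n : ℕ} (hn : n ≠ 0) (hlen : ∀ a, (f a).length = n) : Injective (List.flatMap f) := by
  intro l₁ l₂ h
  have hlength : l₁.length = l₂.length := by
    have := congrArg length h
    simp only [length_flatMap, hlen, map_const', sum_replicate, smul_eq_mul] at this
    exact Nat.eq_of_mul_eq_mul_right (Nat.pos_of_ne_zero hn) this
  induction l₁ generalizing l₂ with
  | nil => exact (length_eq_zero_iff.mp hlength.symm).symm
  | cons a l₁ ih =>
    obtain _ | ⟨b, l₂⟩ := l₂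
    · simp at hlength
    · obtain ⟨hab, hl⟩ := append_inj h (by rw [hlen, hlen])
      rw [hf hab, ih hl (by simpa using hlength)]

theorem List.ncard_setOf_length_eq (β : Type*) [Fintype β] (k : ℕ) :
    {l : List β | l.length = k}.ncard = Fintype.card β ^ k := by
  rw [← Nat.card_coe_set_eq, ← card_vector, ← Nat.card_eq_fintype_card]
  rfl

theorem List.ncard_setOf_length_le_le (β : Type*) [Finite β] (M : ℕ) :
    {w : List β | w.length ≤ M}.ncard ≤ (Nat.card β + 1) ^ M := by
  have : Fintype β := Fintype.ofFinite β
  rw [← Nat.card_coe_set_eq]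
  have hinj : Injective fun (w : {w : List β // w.length ≤ M}) (i : Fin M) => w.1[(i : ℕ)]? := by
    intro w₁ w₂ h
    refine Subtype.ext (List.ext_getElem? fun i => ?_)
    by_cases hi : i < M
    · exact congrFun h ⟨i, hi⟩
    · have hi : M ≤ i := not_lt.mp hi
      rw [getElem?_eq_none (w₁.2.trans hi), getElem?_eq_none (w₂.2.trans hi)]
  refine (Nat.card_le_card_of_injective _ hinj).trans_eq ?_
  simp [Nat.card_eq_fintype_card]

theorem exists_three_ne_of_five_le_card {γ : Type*} [Finite γ] (hγ : 5 ≤ Nat.card γ)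
    (x y : γ) :
    ∃ t u v : γ, u ≠ v ∧ u ≠ t ∧ v ≠ t ∧
      (t ≠ x ∧ t ≠ y) ∧ (u ≠ x ∧ u ≠ y) ∧ (v ≠ x ∧ v ≠ y) := by
  classical
  have := Fintype.ofFinite γ
  have hcard : 2 < (Finset.univ \ {x, y}).card := by
    have := Finset.le_card_sdiff {x, y} Finset.univ
    have := Finset.card_le_two (a := x) (b := y)
    rw [Finset.card_univ, ← Nat.card_eq_fintype_card] at *
    omega
  obtain ⟨t, ht, u, hu, v, hv, htu, htv, huv⟩ := Finset.two_lt_card.mp hcard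
  simp only [Finset.mem_sdiff, Finset.mem_univ, Finset.mem_insert, Finset.mem_singleton,
    true_and, not_or] at ht hu hv
  exact ⟨t, u, v, huv, htu.symm, htv.symm, ht, hu, hv⟩

namespace FreeGroup

variable {α : Type*}

def invLetter (a : α × Bool) : α × Bool := (a.1, !a.2)

@[simp]
theorem invLetter_invLetter (a : α × Bool) : invLetter (invLetter a) = a := by
  simp [invLetter]

theorem invRev_singleton (a : α × Bool) : invRev [a] = [invLetter a] := rfl

theorem fst_eq_imp_snd_eq_iff {a b : α × Bool} :
    (a.1 = b.1 → a.2 = b.2) ↔ b ≠ invLetter a := by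
  obtain ⟨a₁, a₂⟩ := a
  obtain ⟨b₁, b₂⟩ := b
  cases a₂ <;> cases b₂ <;> simp [invLetter, eq_comm]

def conjWord (c : List (α × Bool)) (s : α × Bool) : List (α × Bool) :=
  s :: c ++ [invLetter s]

theorem mk_conjWord (c : List (α × Bool)) (s : α × Bool) :
    mk (conjWord c s) = mk [s] * mk c * (mk [s])⁻¹ := by
  rw [inv_mk, invRev_singleton, mul_mk, mul_mk, conjWord, singleton_append]

theorem IsReduced.conjWord {c : List (α × Bool)} (hc : IsReduced c) (hne : c ≠ [])
    {s : α × Bool} (hhead : s ≠ invLetter (c.head hne)) (hlast : s ≠ c.getLast hne) :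
    IsReduced (conjWord c s) := by
  rw [FreeGroup.conjWord, IsReduced, cons_append]
  refine IsChain.cons_of_ne_nil (by simp) (hc.append (by simp) ?_) ?_
  · simp only [getLast?_eq_some_getLast hne, Option.mem_def, Option.some.injEq, head?_cons]
    rintro _ rfl _ rfl
    rw [fst_eq_imp_snd_eq_iff]
    exact fun h => hlast (by simpa using congrArg invLetter h)
  · rw [head_append_of_ne_nil hne, fst_eq_imp_snd_eq_iff]
    exact fun h => hhead (by rw [h, invLetter_invLetter])

theorem IsReduced.flatMap_conjWord {c : List (α × Bool)} (hc : IsReduced c) (hne : c ≠ [])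
    {L : List (α × Bool)} (hL : L.IsChain (· ≠ ·))
    (hletters : ∀ s ∈ L, s ≠ invLetter (c.head hne) ∧ s ≠ c.getLast hne) :
    IsReduced (L.flatMap (FreeGroup.conjWord c)) := by
  rw [IsReduced, flatMap_def, isChain_flatten (by simp [FreeGroup.conjWord]), isChain_map]
  refine ⟨?_, hL.imp fun s s' hss' => ?_⟩
  · simp only [mem_map]
    rintro _ ⟨s, hs, rfl⟩
    exact hc.conjWord hne (hletters s hs).1 (hletters s hs).2
  · simp only [FreeGroup.conjWord, getLast?_concat]
    simp only [cons_append, head?_cons, Option.mem_def, Option.some.injEq]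
    rintro _ rfl _ rfl
    rw [fst_eq_imp_snd_eq_iff, invLetter_invLetter]
    exact hss'.symm

theorem mk_flatMap_conjWord_mem {N : Subgroup (FreeGroup α)} [N.Normal] {c : List (α × Bool)}
    (hc : mk c ∈ N) (L : List (α × Bool)) : mk (L.flatMap (conjWord c)) ∈ N := by
  induction L with
  | nil => exact one_eq_mk (α := α) ▸ N.one_mem
  | cons s L ih =>
    rw [flatMap_cons, ← mul_mk, mk_conjWord]
    exact N.mul_mem (‹N.Normal›.conj_mem _ hc _) ih

section BlockWord

variable {β : Type*} (c : List (α × Bool)) (t : α × Bool) (a : β → α × Bool)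

def blockLetters (l : List β) : List (α × Bool) := l.flatMap fun b => [t, a b]

def blockWord (l : List β) : List (α × Bool) := (blockLetters t a l).flatMap (conjWord c)

theorem blockWord_append (l₁ l₂ : List β) :
    blockWord c t a (l₁ ++ l₂) = blockWord c t a l₁ ++ blockWord c t a l₂ := by
  simp [blockWord, blockLetters, flatMap_append]

theorem length_blockWord (l : List β) :
    (blockWord c t a l).length = l.length * (2 * (c.length + 2)) := by
  simp only [blockWord, blockLetters, conjWord, length_flatMap, length_cons, length_append,
    length_nil, map_const', sum_replicate, smul_eq_mul]
  ring

variable {c t a}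

theorem blockWord_injective (ha : Injective a) : Injective (blockWord c t a) := by
  refine (flatMap_injective_of_length_eq ?_ (n := c.length + 2) (by omega) ?_).comp
    (flatMap_injective_of_length_eq ?_ (n := 2) (by omega) fun _ => rfl)
  · intro s s' h
    simpa [conjWord] using congrArg head? h
  · simp [conjWord]
  · intro b b' h
    simp only [cons.injEq, and_true, true_and] at h
    exact ha h

theorem isChain_ne_blockLetters (hat : ∀ b, a b ≠ t) (l : List β) :
    (blockLetters t a l).IsChain (· ≠ ·) := by
  rw [blockLetters, flatMap_def, isChain_flatten (by simp), isChain_map]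
  refine ⟨?_, ?_⟩
  · simp [(hat _).symm]
  · simpa using (pairwise_of_forall fun b _ => hat b).isChain

theorem IsReduced.blockWord (hc : IsReduced c) (hne : c ≠ []) (hat : ∀ b, a b ≠ t)
    (ht : t ≠ invLetter (c.head hne) ∧ t ≠ c.getLast hne)
    (ha : ∀ b, a b ≠ invLetter (c.head hne) ∧ a b ≠ c.getLast hne) (l : List β) :
    IsReduced (blockWord c t a l) := by
  refine hc.flatMap_conjWord hne (isChain_ne_blockLetters hat l) fun s hs => ?_
  simp only [blockLetters, mem_flatMap, mem_cons, not_mem_nil, or_false] at hs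
  obtain ⟨b, -, rfl | rfl⟩ := hs
  exacts [ht, ha b]

end BlockWord

theorem exists_two_pow_div_le_ncard [Finite α] (hα : 3 ≤ Nat.card α)
    {N : Subgroup (FreeGroup α)} [N.Normal] (hN : N ≠ ⊥) : ∃ ℓ > 0, ∀ M : ℕ,
      2 ^ (M / ℓ) ≤
        {w : List (α × Bool) | w.length ≤ M ∧ IsReduced (w ++ w) ∧ mk w ∈ N}.ncard := by
  classical
  obtain ⟨x, hx1⟩ := Subgroup.ne_bot_iff_exists_ne_one.mp hN
  set c := (x : FreeGroup α).toWord
  have hne : c ≠ [] := fun h => hx1 (Subtype.ext (toWord_eq_nil_iff.mp h))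
  have hcN : mk c ∈ N := by rw [mk_toWord]; exact x.2
  obtain ⟨t, u, v, huv, hut, hvt, ht, hu, hv⟩ :=
    exists_three_ne_of_five_le_card
      (by simp only [Nat.card_prod, Nat.card_eq_fintype_card (α := Bool), Fintype.card_bool]; omega)
      (invLetter (c.head hne)) (c.getLast hne)
  set a : Bool → α × Bool := fun b => cond b u v
  have ha : Injective a := by
    intro b b' h
    cases b <;> cases b' <;> simp_all [a]
  have hat : ∀ b, a b ≠ t := by
    intro b
    cases b
    exacts [hvt, hut]
  have ha' : ∀ b, a b ≠ invLetter (c.head hne) ∧ a b ≠ c.getLast hne := by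
    intro b
    cases b
    exacts [hv, hu]
  refine ⟨2 * (c.length + 2), by omega, fun M => ?_⟩
  set k := M / (2 * (c.length + 2))
  have hsub : blockWord c t a '' {l | l.length = k} ⊆
      {w | w.length ≤ M ∧ IsReduced (w ++ w) ∧ mk w ∈ N} := by
    rintro _ ⟨l, hl, rfl⟩
    refine ⟨?_, ?_, mk_flatMap_conjWord_mem hcN _⟩
    · rw [length_blockWord, Set.mem_ofPred_eq.mp hl]
      exact Nat.div_mul_le_self _ _
    · rw [← blockWord_append]
      exact isReduced_toWord.blockWord hne hat ht ha' _
  calc 2 ^ k = (blockWord c t a '' {l | l.length = k}).ncard := by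
        rw [Set.ncard_image_of_injective _ (blockWord_injective ha), ncard_setOf_length_eq,
          Fintype.card_bool]
    _ ≤ _ := Set.ncard_le_ncard hsub ((finite_length_le _ M).subset fun _ hw => hw.1)

end FreeGroup

theorem Real.exp_log_two_div_mul_le_two_pow_div {ℓ M : ℕ} (hℓ : 0 < ℓ) (hM : ℓ ≤ M) :
    Real.exp (Real.log 2 / (2 * ℓ) * M) ≤ 2 ^ (M / ℓ) := by
  have hk : M ≤ 2 * ℓ * (M / ℓ) := by
    have hlt := Nat.lt_mul_div_succ M hℓ
    have hle := Nat.mul_le_mul_left ℓ ((Nat.one_le_div_iff hℓ).mpr hM)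
    nlinarith
  rw [← Real.rpow_natCast, Real.rpow_def_of_pos two_pos, Real.exp_le_exp, div_mul_eq_mul_div,
    div_le_iff₀ (by positivity)]
  have : (M : ℝ) ≤ 2 * ℓ * (M / ℓ : ℕ) := by exact_mod_cast hk
  nlinarith [Real.log_pos one_lt_two]

open FreeGroup in
theorem stmt13_general {n r : ℕ} (hr : 2 ≤ r) (h : Fin r → FreeGroup (Fin n))
    (g : FreeGroup (Fin n))
    (hnontriv : ∃ u : FreeGroup (Fin r ⊕ Unit), u ≠ 1 ∧
      u ∈ MonoidHom.ker (FreeGroup.lift (Sum.elim h fun _ => g))) :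
    ∃ α β : ℝ, 0 < α ∧ 0 < β ∧ ∃ M₀ : ℕ, ∀ M : ℕ, M₀ ≤ M →
      Real.exp (α * M) ≤ (rho (FreeGroup.lift (Sum.elim h fun _ => g)) M : ℝ) ∧
      (rho (FreeGroup.lift (Sum.elim h fun _ => g)) M : ℝ) ≤ Real.exp (β * M) := by
  set φ := FreeGroup.lift (Sum.elim h fun _ => g)
  obtain ⟨u, hu1, huφ⟩ := hnontriv
  have hker : φ.ker ≠ ⊥ := fun hbot => hu1 (by rwa [hbot, Subgroup.mem_bot] at huφ)
  obtain ⟨ℓ, hℓ, hlower⟩ := exists_two_pow_div_le_ncard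
    (by simp only [Nat.card_eq_fintype_card, Fintype.card_sum, Fintype.card_fin,
      Fintype.card_unique]; omega) hker
  have hrho : ∀ M, rho φ M =
      {w | w.length ≤ M ∧ IsReduced (w ++ w) ∧ mk w ∈ φ.ker}.ncard := by
    simp [rho, CyclicallyReduced, isReduced_iff_reduce_eq]
  set K := Nat.card ((Fin r ⊕ Unit) × Bool) + 1
  refine ⟨Real.log 2 / (2 * ℓ), Real.log K, by positivity,
    Real.log_pos (Nat.one_lt_cast.mpr (Nat.lt_add_of_pos_left Nat.card_pos)), ℓ,
    fun M hM => ⟨?_, ?_⟩⟩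
  · calc Real.exp (Real.log 2 / (2 * ℓ) * M) ≤ 2 ^ (M / ℓ) :=
          Real.exp_log_two_div_mul_le_two_pow_div hℓ hM
      _ ≤ rho φ M := by rw [hrho]; exact_mod_cast hlower M
  · have hupper : rho φ M ≤ K ^ M :=
      (Set.ncard_le_ncard (fun _ hw => hw.1) (List.finite_length_le _ M)).trans
        (ncard_setOf_length_le_le _ M)
    calc (rho φ M : ℝ) ≤ (K ^ M : ℕ) := by exact_mod_cast hupper
      _ = Real.exp (Real.log K * M) := by
          rw [Nat.cast_pow, ← Real.rpow_natCast, Real.rpow_def_of_pos (by positivity)]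

/-- If `H ≤ Fₙ` has rank `r ≥ 2` (with basis `h`) and the ideal
`I_g = ker(φ_g : H * ⟨x⟩ → Fₙ)` is nontrivial, then the number `ρ_g(M)` of cyclically
reduced words of length at most `M` lying in `I_g` grows exponentially. -/
theorem stmt13 {n r : ℕ} (hr : 2 ≤ r) (h : Fin r → FreeGroup (Fin n))
    (hbasis : Function.Injective (FreeGroup.lift h)) (g : FreeGroup (Fin n))
    (hnontriv : ∃ u : FreeGroup (Fin r ⊕ Unit), u ≠ 1 ∧
      u ∈ MonoidHom.ker (FreeGroup.lift (Sum.elim h fun _ => g))) :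
    ∃ α β : ℝ, 0 < α ∧ 0 < β ∧ ∃ M₀ : ℕ, ∀ M : ℕ, M₀ ≤ M →
      Real.exp (α * M) ≤ (rho (FreeGroup.lift (Sum.elim h fun _ => g)) M : ℝ) ∧
      (rho (FreeGroup.lift (Sum.elim h fun _ => g)) M : ℝ) ≤ Real.exp (β * M) :=
  stmt13_general hr h g hnontriv
end

section
/- Let F = ⟨a⟩, H = ⟨a^m⟩ with m ≥ 1, g = a^k with k ≥ 0 coprime to m, and fix an integer d ≥ 1. Then the function ρ_{g,d}(M), counting cyclically reduced words of length at most M in the basis {h, x} of H * ⟨x⟩ that lie in I_g and have degree d, is bounded above by a polynomial in M of degree d. -/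
/-!
A cyclically reduced word is reduced, so it is recovered from its syllable decomposition
`h^e₀ x^±1 h^e₁ ⋯ x^±1 h^e_d`, and in a word of length at most `M` every `|eᵢ| ≤ M`.
The image of the word in `⟨a⟩` is `a^(m e₀ + Σ (±k + m eᵢ))`, so for a word of `I_g` the
exponent `e₀` is determined by the other syllables because `m ≠ 0`. Hence there are at most
`(2 (2M + 1))^d` such words of degree `d`.
-/

/-- Number of occurrences of `x^{±1}` in a word over the basis `{h, x}` of `H * ⟨x⟩`
(encoded as `Bool`, with `true = x` and `false = h`). -/
def xcount1 (w : List (Bool × Bool)) : ℕ := w.countP fun l => l.1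

/-- A word is cyclically reduced iff its double is a reduced word. -/
def CyclicallyReduced1 (w : List (Bool × Bool)) : Prop :=
  FreeGroup.reduce (w ++ w) = w ++ w

/-- `rhoD1 φ d M` counts the cyclically reduced words of length at most `M` in the basis
`{h, x}` lying in `I_g = ker φ` with degree `d`. -/
noncomputable def rhoD1 (φ : FreeGroup Bool →* Multiplicative ℤ) (d M : ℕ) : ℕ :=
  Set.ncard { w : List (Bool × Bool) |
    w.length ≤ M ∧ CyclicallyReduced1 w ∧ xcount1 w = d ∧ FreeGroup.mk w ∈ MonoidHom.ker φ }

theorem Set.ncard_le_card_pow_of_forall_length_eq {α : Type*} {L : Set (List α)} (s : Finset α)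
    (d : ℕ) (hL : ∀ l ∈ L, l.length = d ∧ ∀ a ∈ l, a ∈ s) : L.ncard ≤ s.card ^ d := by
  classical
  let t : Finset (Fin d → Option α) := Fintype.piFinset fun _ => s.map .some
  calc L.ncard ≤ (t : Set (Fin d → Option α)).ncard := by
        refine Set.ncard_le_ncard_of_injOn (fun l i => l[(i : ℕ)]?) (fun l hl => ?_) ?_
          (Finset.finite_toSet _)
        · obtain ⟨hlen, hs⟩ := hL l hl
          simp only [t, Fintype.coe_piFinset, Set.mem_pi, Set.mem_univ, Finset.coe_map,
            forall_const]
          intro i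
          rw [List.getElem?_eq_getElem (by omega)]
          exact ⟨_, hs _ (List.getElem_mem _), rfl⟩
        · intro l₁ hl₁ l₂ hl₂ h
          refine List.ext_getElem? fun n => ?_
          by_cases hn : n < d
          · exact congrFun h ⟨n, hn⟩
          · rw [List.getElem?_eq_none (by rw [(hL l₁ hl₁).1]; omega),
              List.getElem?_eq_none (by rw [(hL l₂ hl₂).1]; omega)]
    _ = s.card ^ d := by
      simp only [t, Set.ncard_coe_finset, Fintype.card_piFinset, Finset.card_map,
        Finset.prod_const, Finset.card_univ, Fintype.card_fin]

namespace HXWord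

open FreeGroup

theorem isReduced_of_cyclicallyReduced1 {w : List (Bool × Bool)} (hw : CyclicallyReduced1 w) :
    IsReduced w :=
  (IsReduced.of_reduce_eq hw).infix (List.prefix_append w w).isInfix

def sign (b : Bool) : ℤ := if b then 1 else -1

def hPow : ℤ → List (Bool × Bool)
  | .ofNat n => List.replicate n (false, true)
  | .negSucc n => List.replicate (n + 1) (false, false)

theorem hPow_add_sign (e : ℤ) (b : Bool) :
    hPow (e + sign b) = (false, b) :: hPow e ∨ hPow e = (false, !b) :: hPow (e + sign b) := by
  rcases e with (_ | n) | (_ | n) <;> cases b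
  case ofNat.succ.false =>
    right
    rw [show Int.ofNat (n + 1) + sign false = Int.ofNat n by simp [sign]]
    rfl
  all_goals first | exact Or.inl rfl | exact Or.inr rfl

/-- `syllables (h^e₀ x^s₁ h^e₁ ⋯ x^s_d h^e_d) = (e₀, [(s₁, e₁), …, (s_d, e_d)])`, with the
sign `sᵢ = true` for `x`. Adjacent `h`, `h⁻¹` cancel, so only reduced words are recovered. -/
def syllables : List (Bool × Bool) → ℤ × List (Bool × ℤ)
  | [] => (0, [])
  | (false, b) :: w => ((syllables w).1 + sign b, (syllables w).2)
  | (true, b) :: w => (0, (b, (syllables w).1) :: (syllables w).2)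

def ofSyllables (c : ℤ × List (Bool × ℤ)) : List (Bool × Bool) :=
  hPow c.1 ++ c.2.flatMap fun q => (true, q.1) :: hPow q.2

theorem ofSyllables_syllables {w : List (Bool × Bool)} (hw : IsReduced w) :
    ofSyllables (syllables w) = w := by
  induction w with
  | nil => rfl
  | cons a w ih =>
    have ih := ih (hw.infix (List.suffix_cons a w).isInfix)
    obtain ⟨_ | _, b⟩ := a
    · rcases hPow_add_sign (syllables w).1 b with h | h
      · simpa [syllables, ofSyllables, h] using ih
      · -- then `w` would start with the inverse of the letter `(false, b)`
        rw [ofSyllables, h, List.cons_append] at ih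
        rw [← ih, isReduced_cons_cons] at hw
        simp at hw
    · simpa [syllables, ofSyllables, hPow] using ih

theorem length_syllables_snd (w : List (Bool × Bool)) : (syllables w).2.length = xcount1 w := by
  induction w with
  | nil => rfl
  | cons a w ih =>
    unfold xcount1 at ih ⊢
    obtain ⟨_ | _, b⟩ := a <;> simp [syllables, ih]

theorem natAbs_syllables_fst_le (w : List (Bool × Bool)) : (syllables w).1.natAbs ≤ w.length := by
  induction w with
  | nil => rfl
  | cons a w ih => obtain ⟨_ | _, _ | _⟩ := a <;> simp [syllables, sign] <;> omega

theorem natAbs_le_of_mem_syllables_snd {w : List (Bool × Bool)} {q : Bool × ℤ}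
    (hq : q ∈ (syllables w).2) : q.2.natAbs ≤ w.length := by
  induction w with
  | nil => simp [syllables] at hq
  | cons a w ih =>
    obtain ⟨_ | _, b⟩ := a
    · simpa using (ih hq).trans (Nat.le_succ _)
    · rcases List.mem_cons.mp hq with rfl | hq
      · simpa using (natAbs_syllables_fst_le w).trans (Nat.le_succ _)
      · simpa using (ih hq).trans (Nat.le_succ _)

theorem mk_cons (c b : Bool) (w : List (Bool × Bool)) :
    mk ((c, b) :: w) = of c ^ sign b * mk w := by
  rw [show (c, b) :: w = [(c, b)] ++ w from rfl, ← mul_mk]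
  cases b <;> simp [sign, of, inv_mk, invRev]

theorem toAdd_map_mk (φ : FreeGroup Bool →* Multiplicative ℤ) (w : List (Bool × Bool)) :
    (φ (mk w)).toAdd = (φ (of false)).toAdd * (syllables w).1 +
      ((syllables w).2.map fun q =>
        (φ (of true)).toAdd * sign q.1 + (φ (of false)).toAdd * q.2).sum := by
  induction w with
  | nil => simp [syllables, ← one_eq_mk]
  | cons a w ih =>
    obtain ⟨_ | _, b⟩ := a <;>
      simp only [mk_cons, _root_.map_mul, map_zpow, toAdd_mul, toAdd_zpow, ih, syllables,
        List.map_cons, List.sum_cons, smul_eq_mul] <;> ring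

theorem eq_of_syllables_snd_eq {φ : FreeGroup Bool →* Multiplicative ℤ} (hφ : φ (of false) ≠ 1)
    {w₁ w₂ : List (Bool × Bool)} (hw₁ : IsReduced w₁) (hw₂ : IsReduced w₂)
    (hk₁ : mk w₁ ∈ φ.ker) (hk₂ : mk w₂ ∈ φ.ker) (h : (syllables w₁).2 = (syllables w₂).2) :
    w₁ = w₂ := by
  have ha : (φ (of false)).toAdd ≠ 0 := hφ
  have hfst : (syllables w₁).1 = (syllables w₂).1 := by
    have h₁ := toAdd_map_mk φ w₁
    have h₂ := toAdd_map_mk φ w₂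
    rw [MonoidHom.mem_ker.mp hk₁, h] at h₁
    rw [MonoidHom.mem_ker.mp hk₂] at h₂
    exact mul_left_cancel₀ ha (by simp at h₁ h₂; linarith)
  rw [← ofSyllables_syllables hw₁, ← ofSyllables_syllables hw₂, Prod.ext hfst h]

end HXWord

open FreeGroup HXWord in
theorem rhoD1_le_pow {φ : FreeGroup Bool →* Multiplicative ℤ} (hφ : φ (of false) ≠ 1) (d M : ℕ) :
    rhoD1 φ d M ≤ (2 * (2 * M + 1)) ^ d := by
  set S := { w : List (Bool × Bool) |
    w.length ≤ M ∧ CyclicallyReduced1 w ∧ xcount1 w = d ∧ FreeGroup.mk w ∈ MonoidHom.ker φ }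
  have hinj : S.InjOn fun w => (syllables w).2 := fun w₁ hw₁ w₂ hw₂ h =>
    eq_of_syllables_snd_eq hφ (isReduced_of_cyclicallyReduced1 hw₁.2.1)
      (isReduced_of_cyclicallyReduced1 hw₂.2.1) hw₁.2.2.2 hw₂.2.2.2 h
  calc rhoD1 φ d M = ((fun w => (syllables w).2) '' S).ncard := hinj.ncard_image.symm
    _ ≤ (Finset.univ ×ˢ Finset.Icc (-(M : ℤ)) M).card ^ d := by
      refine Set.ncard_le_card_pow_of_forall_length_eq _ d ?_
      rintro _ ⟨w, hw, rfl⟩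
      refine ⟨by rw [length_syllables_snd, hw.2.2.1], fun q hq => ?_⟩
      have := (natAbs_le_of_mem_syllables_snd hq).trans hw.1
      simp only [Finset.mem_product, Finset.mem_univ, Finset.mem_Icc, true_and]
      omega
    _ = (2 * (2 * M + 1)) ^ d := by
      rw [Finset.card_product, Int.card_Icc, Finset.card_univ, Fintype.card_bool]
      congr 2
      omega

theorem stmt14_general (m k : ℕ) (hm : 1 ≤ m) (d : ℕ) :
    ∃ C : ℝ, 0 < C ∧ ∀ M : ℕ, 1 ≤ M →
      (rhoD1 (FreeGroup.lift
          (fun b : Bool => Multiplicative.ofAdd (if b then (k : ℤ) else (m : ℤ)))) d M : ℝ)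
        ≤ C * (M : ℝ) ^ d := by
  refine ⟨6 ^ d, by positivity, fun M hM => ?_⟩
  have hM' : (1 : ℝ) ≤ M := by exact_mod_cast hM
  calc _ ≤ (((2 * (2 * M + 1)) ^ d : ℕ) : ℝ) := by
        refine Nat.cast_le.mpr (rhoD1_le_pow ?_ d M)
        simp only [FreeGroup.lift_apply_of, Bool.false_eq_true, if_false, ne_eq, ofAdd_eq_one]
        omega
    _ ≤ 6 ^ d * (M : ℝ) ^ d := by
      rw [← mul_pow]
      push_cast
      gcongr ?_ ^ d
      linarith

/-- Let `F = ⟨a⟩` be infinite cyclic (modelled as `Multiplicative ℤ`), `H = ⟨a^m⟩` with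
`m ≥ 1`, `g = a^k` with `k ≥ 0` coprime to `m`, and fix `d ≥ 1`.  Then `ρ_{g,d}(M)` is
bounded above by a polynomial of degree `d` in `M`. -/
theorem stmt14 (m k : ℕ) (hm : 1 ≤ m) (hmk : Nat.Coprime m k) (d : ℕ) (hd : 1 ≤ d) :
    ∃ C : ℝ, 0 < C ∧ ∀ M : ℕ, 1 ≤ M →
      (rhoD1 (FreeGroup.lift
          (fun b : Bool => Multiplicative.ofAdd (if b then (k : ℤ) else (m : ℤ)))) d M : ℝ)
        ≤ C * (M : ℝ) ^ d :=
  stmt14_general m k hm d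
end

section
/- With the notation of the previous statement, the word â_i over {h_1^{±1},...,h_n^{±1},x^{±1}} satisfies: (a) â_i contains only the letters h_1,...,h_i and x; (b) in any two consecutive letters of â_i at least one is x; and (c) the length of â_i equals (p²+3p+4)/2 · (p^{i-1}−1)/(p−1) + p^{i-1}. -/
/-- The word `u(y,x) = x y x² y x³ ⋯ y x^{p+1}`, where `y` is substituted by the word `y`
and `x` by the single letter `xl`. -/
def uWord {A : Type*} (p : ℕ) (xl : A) (y : List A) : List A :=
  (List.ofFn fun i : Fin p => List.replicate (i.1 + 1) xl ++ y).flatten ++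
    List.replicate (p + 1) xl

/-!
Every block `xᵏ y` of `u(y, x)` and the closing block `x^{p+1}` start with `x`, so gluing blocks in
which `x` separates consecutive letters keeps that property, and so does putting a letter in front
of `u(y, x)`. Counting letters, `2 |u(y, x)| = (p + 1)(p + 2) + 2p |y|`, so the lengths satisfy
`2 |âᵢ₊₁| = p² + 3p + 4 + 2p |âᵢ|`, whose solution is the stated closed form.
-/

section

variable {A : Type*} (p : ℕ) (x : A) (y : List A)

theorem mem_uWord {a : A} (h : a ∈ uWord p x y) : a = x ∨ a ∈ y := by
  simp only [uWord, List.mem_append, List.mem_flatten, List.mem_ofFn, List.mem_replicate] at h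
  grind

theorem two_mul_length_uWord :
    2 * (uWord p x y).length = (p + 1) * (p + 2) + 2 * p * y.length := by
  have gauss : (∑ i : Fin p, ((i : ℕ) + 1)) * 2 = (p + 1) * p := by
    simpa [Fin.sum_univ_eq_sum_range (· + 1), Finset.sum_range_succ'] using
      Finset.sum_range_id_mul_two (p + 1)
  simp only [uWord, List.length_append, List.length_flatten, List.map_ofFn, List.sum_ofFn,
    Function.comp_def, List.length_replicate]
  rw [Finset.sum_add_distrib (f := fun i : Fin p => (i : ℕ) + 1)]
  simp only [Finset.sum_const, Finset.card_univ, Fintype.card_fin, smul_eq_mul]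
  linear_combination gauss

theorem isChain_cons_uWord {y : List A} (hy : y.IsChain (fun a b => a = x ∨ b = x)) (a : A) :
    (a :: uWord p x y).IsChain (fun a b => a = x ∨ b = x) := by
  have hsep : ∀ k, (List.replicate k x).IsChain (fun a b => a = x ∨ b = x) :=
    fun k => List.isChain_replicate_of_rel k (Or.inl rfl)
  refine List.IsChain.cons ?_ (by cases p <;> simp [uWord, List.ofFn_succ, List.replicate_succ])
  rw [uWord, ← List.flatten_concat, List.isChain_flatten (by simp)]
  refine ⟨?_, List.Pairwise.isChain (List.pairwise_of_forall_mem_list ?_)⟩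
  · simp only [List.mem_append, List.mem_singleton, List.mem_ofFn]
    rintro l (⟨i, rfl⟩ | rfl)
    · exact (hsep _).append hy (by simp [List.getLast?_replicate])
    · exact hsep _
  · simp only [List.mem_append, List.mem_singleton, List.mem_ofFn]
    rintro l₁ - l₂ (⟨i, rfl⟩ | rfl) <;> simp [List.replicate_succ]

end

/-- Fix `p ≥ 2` and `n ≥ 2`.  Words over the alphabet `{h₁,…,hₙ,x}` are modelled as lists
over `Option (Fin n)`, with `some j = h_{j+1}` and `none = x`.  Let `â₁ = h₁` and
`â_{i+1} = h_{i+1} · u(âᵢ, x)`.  Then: (a) `âᵢ` contains only the letters `h₁,…,hᵢ` and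
`x`; (b) of any two consecutive letters of `âᵢ` at least one is `x`; (c) the length of
`âᵢ` is `(p²+3p+4)/2 · (p^{i-1}−1)/(p−1) + p^{i-1}` (stated multiplied through by
`2(p−1)` to avoid division). -/
theorem stmt19 (p n : ℕ) (hp : 2 ≤ p) (hn : 2 ≤ n)
    (aw : Fin n → List (Option (Fin n)))
    (haw0 : aw ⟨0, by omega⟩ = [some ⟨0, by omega⟩])
    (hawS : ∀ i : ℕ, ∀ hi : i + 1 < n,
      aw ⟨i + 1, hi⟩ = some ⟨i + 1, hi⟩ :: uWord p none (aw ⟨i, Nat.lt_of_succ_lt hi⟩)) :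
    ∀ i : Fin n,
      (∀ l ∈ aw i, l = none ∨ ∃ j : Fin n, j.1 ≤ i.1 ∧ l = some j) ∧
      List.Chain' (fun a b => a = none ∨ b = none) (aw i) ∧
      2 * (p - 1) * (aw i).length =
        (p ^ 2 + 3 * p + 4) * (p ^ i.1 - 1) + 2 * (p - 1) * p ^ i.1 := by
  rintro ⟨i, hi⟩
  induction i with
  | zero =>
    rw [haw0]
    exact ⟨by simp, List.isChain_singleton _, by simp⟩
  | succ i ih =>
    obtain ⟨hletters, hchain, hlength⟩ := ih (by omega)
    rw [hawS i hi]
    refine ⟨?_, isChain_cons_uWord p none hchain _, ?_⟩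
    · intro l hl
      rcases List.mem_cons.1 hl with rfl | hl
      · exact Or.inr ⟨_, le_rfl, rfl⟩
      rcases mem_uWord p none _ hl with rfl | hl
      · exact Or.inl rfl
      rcases hletters l hl with rfl | ⟨j, hj, rfl⟩
      · exact Or.inl rfl
      · exact Or.inr ⟨j, Nat.le_succ_of_le hj, rfl⟩
    · have hu := two_mul_length_uWord p none (aw ⟨i, by omega⟩)
      have hpow : 1 ≤ p ^ i := Nat.one_le_pow _ _ (by omega)
      rw [List.length_cons]
      zify [show 1 ≤ p by omega, hpow, hpow.trans (Nat.pow_le_pow_right (by omega) i.le_succ)]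
        at hu hlength ⊢
      linear_combination (p - 1 : ℤ) * hu + (p : ℤ) * hlength
end
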